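/- arXiv:2102.10584 — 11 statements merged into one kernel-verified Lean document; each statement's English description precedes it below -/
import Mathlib

section
/- For every finite simple graph G with no isolated vertex, the double domination number satisfies γ×2(G) ≤ α(G) + γ(G), where α(G) is the independence number and γ(G) is the domination number. -/
/-! Basic domination-type definitions for finite simple graphs. -/

variable {V : Type*}

/-- The closed neighbourhood `N[v] = N(v) ∪ {v}`. -/
def closedNbhd (G : SimpleGraph V) (v : V) : Set V := insert v (G.neighborSet v)

/-- `D` is a dominating set: every vertex outside `D` has a neighbour in `D`. -/
def IsDomSet (G : SimpleGraph V) (D : Set V) : Prop := ∀ v ∉ D, ∃ u ∈ D, G.Adj u v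

/-- `D` is a double dominating set: `|N[v] ∩ D| ≥ 2` for every vertex `v`. -/
def IsDoubleDomSet (G : SimpleGraph V) (D : Set V) : Prop :=
  ∀ v : V, 2 ≤ (closedNbhd G v ∩ D).ncard

/-- `D` is a 2-dominating set: every vertex outside `D` has ≥ 2 neighbours in `D`. -/
def IsTwoDomSet (G : SimpleGraph V) (D : Set V) : Prop :=
  ∀ v ∉ D, 2 ≤ (G.neighborSet v ∩ D).ncard

/-- `D` is a total dominating set: every vertex has a neighbour in `D`. -/
def IsTotalDomSet (G : SimpleGraph V) (D : Set V) : Prop := ∀ v : V, ∃ u ∈ D, G.Adj u v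

/-- `S` is an independent set: no two vertices of `S` are adjacent. -/
def IsIndepSet' (G : SimpleGraph V) (S : Set V) : Prop := ∀ u ∈ S, ∀ v ∈ S, ¬ G.Adj u v

/-- `C` is a vertex cover: every edge has an endpoint in `C`. -/
def IsVertexCover (G : SimpleGraph V) (C : Set V) : Prop := ∀ u v, G.Adj u v → u ∈ C ∨ v ∈ C

/-- The domination number `γ(G)`. -/
noncomputable def domNum (G : SimpleGraph V) : ℕ :=
  sInf {k | ∃ D : Set V, IsDomSet G D ∧ D.ncard = k}

/-- The double domination number `γ×2(G)`. -/
noncomputable def ddomNum (G : SimpleGraph V) : ℕ :=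
  sInf {k | ∃ D : Set V, IsDoubleDomSet G D ∧ D.ncard = k}

/-- The 2-domination number `γ₂(G)`. -/
noncomputable def twoDomNum (G : SimpleGraph V) : ℕ :=
  sInf {k | ∃ D : Set V, IsTwoDomSet G D ∧ D.ncard = k}

/-- The total domination number `γt(G)`. -/
noncomputable def totalDomNum (G : SimpleGraph V) : ℕ :=
  sInf {k | ∃ D : Set V, IsTotalDomSet G D ∧ D.ncard = k}

/-- The vertex cover number `β(G)`. -/
noncomputable def vcNum (G : SimpleGraph V) : ℕ :=
  sInf {k | ∃ C : Set V, IsVertexCover G C ∧ C.ncard = k}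

/-- The independence number `α(G)`. -/
noncomputable def indepNum (G : SimpleGraph V) : ℕ :=
  sSup {k | ∃ S : Set V, IsIndepSet' G S ∧ S.ncard = k}

/-- The independent domination number `i(G)`. -/
noncomputable def indepDomNum (G : SimpleGraph V) : ℕ :=
  sInf {k | ∃ S : Set V, IsIndepSet' G S ∧ IsDomSet G S ∧ S.ncard = k}

/-- The set of leaves (vertices of degree one). -/
def leafSet (G : SimpleGraph V) : Set V := {v | (G.neighborSet v).ncard = 1}

/-- The set of support vertices (vertices adjacent to a leaf). -/
def supportSet (G : SimpleGraph V) : Set V := {v | ∃ u, G.Adj v u ∧ u ∈ leafSet G}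

/-!
Take a minimum dominating set `D` and a maximal independent set `I` of the subgraph induced by
`V ∖ D`. Every vertex outside `D ∪ I` then has a neighbour in `D` and a different one in `I`,
and every vertex of `D ∪ I` is in the set together with some neighbour, except the vertices of
`D` having no neighbour in `D ∪ I`. These form a set `B` which, together with `I`, is
independent; adding one neighbour of each vertex of `B` gives a double dominating set of size
at most `|D| + |I ∪ B| ≤ γ(G) + α(G)`.
-/

open Set

variable {G : SimpleGraph V}

lemma self_mem_closedNbhd (G : SimpleGraph V) (v : V) : v ∈ closedNbhd G v :=
  mem_insert v _

lemma mem_closedNbhd_of_adj {v u : V} (h : G.Adj v u) : u ∈ closedNbhd G v :=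
  mem_insert_of_mem v h

lemma isDoubleDomSet_of_forall_exists_ne [Finite V] {X : Set V}
    (h : ∀ v, ∃ a ∈ closedNbhd G v ∩ X, ∃ b ∈ closedNbhd G v ∩ X, a ≠ b) :
    IsDoubleDomSet G X := fun v => by
  obtain ⟨a, ha, b, hb, hab⟩ := h v
  exact (one_lt_ncard_iff).2 ⟨a, b, ha, hb, hab⟩

lemma ddomNum_le_ncard {X : Set V} (hX : IsDoubleDomSet G X) : ddomNum G ≤ X.ncard :=
  Nat.sInf_le ⟨X, hX, rfl⟩

lemma exists_isDomSet_ncard_eq_domNum (G : SimpleGraph V) :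
    ∃ D, IsDomSet G D ∧ D.ncard = domNum G :=
  Nat.sInf_mem (s := {k | ∃ D, IsDomSet G D ∧ D.ncard = k})
    ⟨_, univ, fun v hv => (hv (mem_univ v)).elim, rfl⟩

lemma IsIndepSet'.ncard_le_indepNum [Finite V] {S : Set V} (hS : IsIndepSet' G S) :
    S.ncard ≤ indepNum G :=
  le_csSup ⟨Nat.card V, by rintro _ ⟨T, -, rfl⟩; exact ncard_le_card T⟩ ⟨S, hS, rfl⟩

lemma IsIndepSet'.insert {I : Set V} {v : V} (hI : IsIndepSet' G I)
    (hv : ∀ i ∈ I, ¬ G.Adj v i) : IsIndepSet' G (insert v I) := by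
  rintro a (rfl | ha) b (rfl | hb) hab
  · exact G.loopless.irrefl _ hab
  · exact hv b hb hab
  · exact hv a ha hab.symm
  · exact hI a ha b hb hab

lemma exists_isIndepSet'_subset_forall_exists_adj [Finite V] (G : SimpleGraph V) (A : Set V) :
    ∃ I ⊆ A, IsIndepSet' G I ∧ ∀ v ∈ A, v ∉ I → ∃ i ∈ I, G.Adj v i := by
  obtain ⟨I, ⟨hIA, hI⟩, hmax⟩ := (toFinite {I | I ⊆ A ∧ IsIndepSet' G I}).exists_maximal
    ⟨∅, empty_subset A, fun _ h => h.elim⟩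
  refine ⟨I, hIA, hI, fun v hvA hvI => ?_⟩
  by_contra! hv
  exact hvI (hmax ⟨insert_subset hvA hIA, hI.insert hv⟩ (subset_insert v I) (mem_insert v I))

def withoutNbrIn (G : SimpleGraph V) (D S : Set V) : Set V := {d ∈ D | ∀ u ∈ S, ¬ G.Adj d u}

lemma withoutNbrIn_subset (G : SimpleGraph V) (D S : Set V) : withoutNbrIn G D S ⊆ D :=
  fun _ hd => hd.1

lemma IsIndepSet'.union_withoutNbrIn {D I : Set V} (hI : IsIndepSet' G I) :
    IsIndepSet' G (I ∪ withoutNbrIn G D (D ∪ I)) := by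
  rintro a (haI | ⟨-, ha⟩) b (hbI | ⟨hbD, hb⟩) hab
  · exact hI a haI b hbI hab
  · exact hb a (Or.inr haI) hab.symm
  · exact ha b (Or.inr hbI) hab
  · exact ha b (Or.inl hbD) hab

lemma isDoubleDomSet_union_image_withoutNbrIn [Finite V] {D I : Set V} {f : V → V}
    (hD : IsDomSet G D) (hID : I ⊆ Dᶜ) (hImax : ∀ v ∈ Dᶜ, v ∉ I → ∃ i ∈ I, G.Adj v i)
    (hf : ∀ v, G.Adj v (f v)) :
    IsDoubleDomSet G (I ∪ D ∪ f '' withoutNbrIn G D (D ∪ I)) := by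
  refine isDoubleDomSet_of_forall_exists_ne fun v => ?_
  by_cases hvD : v ∈ D
  · refine ⟨v, ⟨self_mem_closedNbhd G v, .inl (.inr hvD)⟩, ?_⟩
    by_cases hv : ∃ u ∈ D ∪ I, G.Adj v u
    · obtain ⟨u, hu, hvu⟩ := hv
      refine ⟨u, ⟨mem_closedNbhd_of_adj hvu, ?_⟩, G.ne_of_adj hvu⟩
      rcases hu with hu | hu
      exacts [.inl (.inr hu), .inl (.inl hu)]
    · push Not at hv
      exact ⟨f v, ⟨mem_closedNbhd_of_adj (hf v), .inr ⟨v, ⟨hvD, hv⟩, rfl⟩⟩, G.ne_of_adj (hf v)⟩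
  obtain ⟨d, hdD, hdv⟩ := hD v hvD
  have hd : d ∈ closedNbhd G v ∩ (I ∪ D ∪ f '' withoutNbrIn G D (D ∪ I)) :=
    ⟨mem_closedNbhd_of_adj hdv.symm, .inl (.inr hdD)⟩
  by_cases hvI : v ∈ I
  · exact ⟨v, ⟨self_mem_closedNbhd G v, .inl (.inl hvI)⟩, d, hd, fun h => hvD (h ▸ hdD)⟩
  obtain ⟨i, hiI, hvi⟩ := hImax v hvD hvI
  exact ⟨i, ⟨mem_closedNbhd_of_adj hvi, .inl (.inl hiI)⟩, d, hd, fun h => hID hiI (h ▸ hdD)⟩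

lemma ncard_union_union_image_le [Finite V] {I D B : Set V} (f : V → V) (hIB : Disjoint I B) :
    (I ∪ D ∪ f '' B).ncard ≤ (I ∪ B).ncard + D.ncard :=
  calc (I ∪ D ∪ f '' B).ncard = (I ∪ f '' B ∪ D).ncard := by rw [union_right_comm]
    _ ≤ I.ncard + (f '' B).ncard + D.ncard :=
      (ncard_union_le _ _).trans (Nat.add_le_add_right (ncard_union_le _ _) _)
    _ ≤ (I ∪ B).ncard + D.ncard := by
      rw [ncard_union_eq hIB]; exact Nat.add_le_add_right (Nat.add_le_add_left ncard_image_le _) _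

/-- For every finite simple graph `G` with no isolated vertex,
`γ×2(G) ≤ α(G) + γ(G)`. -/
theorem stmt0 {V : Type*} [Fintype V] (G : SimpleGraph V)
    (hiso : ∀ v : V, ∃ u : V, G.Adj v u) :
    ddomNum G ≤ indepNum G + domNum G := by
  obtain ⟨D, hD, hDcard⟩ := exists_isDomSet_ncard_eq_domNum G
  obtain ⟨I, hID, hI, hImax⟩ := exists_isIndepSet'_subset_forall_exists_adj G Dᶜ
  choose f hf using hiso
  have hIB : Disjoint I (withoutNbrIn G D (D ∪ I)) :=
    disjoint_of_subset_left hID (disjoint_compl_left.mono_right (withoutNbrIn_subset G D _))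
  calc ddomNum G ≤ (I ∪ D ∪ f '' withoutNbrIn G D (D ∪ I)).ncard :=
        ddomNum_le_ncard (isDoubleDomSet_union_image_withoutNbrIn hD hID hImax hf)
    _ ≤ (I ∪ withoutNbrIn G D (D ∪ I)).ncard + D.ncard := ncard_union_union_image_le f hIB
    _ ≤ indepNum G + domNum G := by
        rw [hDcard]; gcongr; exact hI.union_withoutNbrIn.ncard_le_indepNum
end

section
/- For every finite simple graph G with no isolated vertex, the double domination number satisfies γ×2(G) ≤ α(G) + i(G), where α(G) is the independence number and i(G) is the independent domination number. -/
/-! Basic domination-type definitions for finite simple graphs. -/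

variable {V : Type*}

/-- For every finite simple graph `G` with no isolated vertex,
`γ×2(G) ≤ α(G) + i(G)`. -/
theorem stmt1 {V : Type*} [Fintype V] (G : SimpleGraph V)
    (hiso : ∀ v : V, ∃ u : V, G.Adj v u) :
    ddomNum G ≤ indepNum G + indepDomNum G := by

  classical
  set K : Set ℕ := {k | ∃ S : Set V, IsIndepSet' G S ∧ S.ncard = k} with hK
  have hBdd : BddAbove K := by
    refine ⟨Fintype.card V, ?_⟩
    rintro k ⟨S, -, rfl⟩
    have := Set.ncard_le_ncard (Set.subset_univ S) (Set.toFinite _)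
    simpa [Set.ncard_univ] using this
  have hKne : K.Nonempty := ⟨0, ∅, by intro a ha; simp at ha, by simp⟩
  -- maximum independent sets are dominating
  have maxdom : ∀ S : Set V, IsIndepSet' G S → S.ncard = indepNum G → IsDomSet G S := by
    intro S hind hcard v hv
    by_contra h
    push_neg at h
    have hind' : IsIndepSet' G (insert v S) := by
      intro a ha b hb hab
      rcases ha with rfl | ha
      · rcases hb with rfl | hb
        · exact G.irrefl hab
        · exact h b hb (hab.symm)
      · rcases hb with rfl | hb
        · exact h a ha hab
        · exact hind a ha b hb hab
    have hle : (insert v S).ncard ≤ indepNum G := le_csSup hBdd ⟨_, hind', rfl⟩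
    have heq : (insert v S).ncard = S.ncard + 1 :=
      Set.ncard_insert_of_notMem hv (Set.toFinite _)
    omega
  -- a maximum independent set exists
  obtain ⟨S₀, hS₀ind, hS₀card⟩ : ∃ S : Set V, IsIndepSet' G S ∧ S.ncard = indepNum G :=
    Nat.sSup_mem hKne hBdd
  have hS₀dom := maxdom S₀ hS₀ind hS₀card
  -- a minimum independent dominating set exists
  have hKI : (indepDomNum G) ∈ {k | ∃ S : Set V, IsIndepSet' G S ∧ IsDomSet G S ∧ S.ncard = k} :=
    Nat.sInf_mem ⟨S₀.ncard, S₀, hS₀ind, hS₀dom, rfl⟩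
  obtain ⟨I, hIind, hIdom, hIcard⟩ := hKI
  -- choose a maximum independent set minimizing |S ∩ I|
  set P : Set ℕ :=
    {k | ∃ S : Set V, IsIndepSet' G S ∧ S.ncard = indepNum G ∧ (S ∩ I).ncard = k} with hP
  have hPne : P.Nonempty := ⟨_, S₀, hS₀ind, hS₀card, rfl⟩
  obtain ⟨S, hSind, hScard, hSmin⟩ := Nat.sInf_mem hPne
  have hSdom := maxdom S hSind hScard
  -- a neighbor function
  choose f hf using hiso
  set D : Set V := S ∪ I ∪ (f '' (S ∩ I)) with hD
  have hSD : S ⊆ D := fun x hx => Or.inl (Or.inl hx)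
  have hID : I ⊆ D := fun x hx => Or.inl (Or.inr hx)
  have two_of : ∀ (v a b : V), a ∈ closedNbhd G v ∩ D → b ∈ closedNbhd G v ∩ D → a ≠ b →
      2 ≤ (closedNbhd G v ∩ D).ncard := by
    intro v a b ha hb hab
    have : 1 < (closedNbhd G v ∩ D).ncard :=
      (Set.one_lt_ncard_iff (Set.toFinite _)).2 ⟨a, b, ha, hb, hab⟩
    omega
  have mem_self : ∀ v : V, v ∈ closedNbhd G v := fun v => Or.inl rfl
  have mem_nb : ∀ v u : V, G.Adj u v → u ∈ closedNbhd G v := by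
    intro v u h; exact Or.inr h.symm
  have hdd : IsDoubleDomSet G D := by
    intro v
    by_cases hvS : v ∈ S
    · by_cases hvI : v ∈ I
      · -- v ∈ S ∩ I : use v and f v
        refine two_of v v (f v) ⟨mem_self v, hSD hvS⟩
          ⟨mem_nb v (f v) (hf v).symm, Or.inr ⟨v, ⟨hvS, hvI⟩, rfl⟩⟩ (hf v).ne
      · obtain ⟨i, hiI, hiv⟩ := hIdom v hvI
        exact two_of v v i ⟨mem_self v, hSD hvS⟩ ⟨mem_nb v i hiv, hID hiI⟩ hiv.ne'
    · by_cases hvI : v ∈ I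
      · obtain ⟨s, hsS, hsv⟩ := hSdom v hvS
        exact two_of v v s ⟨mem_self v, hID hvI⟩ ⟨mem_nb v s hsv, hSD hsS⟩ hsv.ne'
      · obtain ⟨s, hsS, hsv⟩ := hSdom v hvS
        obtain ⟨i, hiI, hiv⟩ := hIdom v hvI
        by_contra hcon
        push_neg at hcon
        -- the set closedNbhd v ∩ D has at most one element, containing s
        have hsmem : s ∈ closedNbhd G v ∩ D := ⟨mem_nb v s hsv, hSD hsS⟩
        have huniq : ∀ x ∈ closedNbhd G v ∩ D, x = s := by
          intro x hx
          by_contra hxs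
          exact absurd (two_of v x s hx hsmem hxs) (by omega)
        have hsi : i = s := huniq i ⟨mem_nb v i hiv, hID hiI⟩
        have hsI : s ∈ I := hsi ▸ hiI
        -- swap argument: S' = insert v (S \ {s}) is a maximum independent set
        -- with smaller intersection with I
        set S' : Set V := insert v (S \ {s}) with hS'
        have hS'ind : IsIndepSet' G S' := by
          intro a ha b hb hab
          rcases ha with rfl | ⟨haS, has⟩
          · rcases hb with rfl | ⟨hbS, hbs⟩
            · exact G.irrefl hab
            · exact hbs (huniq b ⟨mem_nb a b hab.symm, hSD hbS⟩)
          · rcases hb with rfl | ⟨hbS, hbs⟩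
            · exact has (huniq a ⟨mem_nb b a hab, hSD haS⟩)
            · exact hSind a haS b hbS hab
        have hvS' : v ∉ S \ {s} := fun h => hvS h.1
        have hS'card : S'.ncard = indepNum G := by
          have h1 : S'.ncard = (S \ {s}).ncard + 1 :=
            Set.ncard_insert_of_notMem hvS' (Set.toFinite _)
          have h2 : (S \ {s}).ncard + 1 = S.ncard :=
            Set.ncard_diff_singleton_add_one hsS (Set.toFinite _)
          omega
        have hS'I : S' ∩ I = (S ∩ I) \ {s} := by
          ext x
          constructor
          · rintro ⟨(rfl | ⟨hxS, hxs⟩), hxI⟩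
            · exact absurd hxI hvI
            · exact ⟨⟨hxS, hxI⟩, hxs⟩
          · rintro ⟨⟨hxS, hxI⟩, hxs⟩
            exact ⟨Or.inr ⟨hxS, hxs⟩, hxI⟩
        have hmemI : s ∈ S ∩ I := ⟨hsS, hsI⟩
        have hlt : (S' ∩ I).ncard + 1 = (S ∩ I).ncard := by
          rw [hS'I]
          exact Set.ncard_diff_singleton_add_one hmemI (Set.toFinite _)
        have hge : sInf P ≤ (S' ∩ I).ncard := Nat.sInf_le ⟨S', hS'ind, hS'card, rfl⟩
        omega
  -- cardinality bound
  have hcard : D.ncard ≤ indepNum G + indepDomNum G := by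
    have h1 : D.ncard ≤ (S ∪ I).ncard + (f '' (S ∩ I)).ncard := Set.ncard_union_le _ _
    have h2 : (f '' (S ∩ I)).ncard ≤ (S ∩ I).ncard := Set.ncard_image_le (Set.toFinite _)
    have h3 : (S ∩ I).ncard + (S ∪ I).ncard = S.ncard + I.ncard :=
      Set.ncard_inter_add_ncard_union S I (Set.toFinite _) (Set.toFinite _)
    omega
  have : ddomNum G ≤ D.ncard := Nat.sInf_le ⟨D, hdd, rfl⟩
  omega
end

section
/- Let G be a finite simple graph with no isolated vertex and order n ≥ 3, and let L(G) and S(G) denote the set of leaves and the set of support vertices of G, respectively. Then γ×2(G) ≤ β(G) + γ(G) + |L(G)| − |S(G)|, where β(G) is the vertex cover number and γ(G) is the domination number. -/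
/-! Basic domination-type definitions for finite simple graphs. -/

variable {V : Type*}

/-- For every finite simple graph `G` with no isolated vertex and order `n ≥ 3`,
`γ×2(G) ≤ β(G) + γ(G) + |L(G)| − |S(G)|`. -/
theorem stmt2 {V : Type*} [Fintype V] (G : SimpleGraph V)
    (hiso : ∀ v : V, ∃ u : V, G.Adj v u)
    (hn : 3 ≤ Fintype.card V) :
    ddomNum G ≤ vcNum G + domNum G + (leafSet G).ncard - (supportSet G).ncard := by
  classical
  choose nb hnb using hiso
  set L : Set V := leafSet G with hLdef
  set S : Set V := supportSet G with hSdef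
  -- unique neighbour of a leaf
  have leaf_unique : ∀ v ∈ L, ∀ u, G.Adj v u → u = nb v := by
    intro v hv u hu
    obtain ⟨a, ha⟩ := Set.ncard_eq_one.mp hv
    have h1 : u ∈ G.neighborSet v := hu
    have h2 : nb v ∈ G.neighborSet v := hnb v
    rw [ha, Set.mem_singleton_iff] at h1 h2
    rw [h1, h2]
  -- minimum vertex cover and dominating set
  obtain ⟨C, hC, hCcard⟩ : ∃ C : Set V, IsVertexCover G C ∧ C.ncard = vcNum G := by
    have h : vcNum G ∈ {k | ∃ C : Set V, IsVertexCover G C ∧ C.ncard = k} :=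
      Nat.sInf_mem ⟨(Set.univ : Set V).ncard, Set.univ,
        fun u v _ => Or.inl (Set.mem_univ u), rfl⟩
    exact h
  obtain ⟨D, hD, hDcard⟩ : ∃ D : Set V, IsDomSet G D ∧ D.ncard = domNum G := by
    have h : domNum G ∈ {k | ∃ D : Set V, IsDomSet G D ∧ D.ncard = k} :=
      Nat.sInf_mem ⟨(Set.univ : Set V).ncard, Set.univ,
        fun v hv => absurd (Set.mem_univ v) hv, rfl⟩
    exact h
  -- chosen leaf of a support vertex
  let lf : V → V := fun s => if h : s ∈ S then h.choose else nb s
  have hlf : ∀ s ∈ S, G.Adj s (lf s) ∧ lf s ∈ L := by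
    intro s hs
    simp only [lf, dif_pos hs]
    exact hs.choose_spec
  have lf_adj : ∀ s ∈ S, G.Adj s (lf s) := fun s hs => (hlf s hs).1
  have lf_leaf : ∀ s ∈ S, lf s ∈ L := fun s hs => (hlf s hs).2
  have lf_inj : ∀ s ∈ S, ∀ s' ∈ S, lf s = lf s' → s = s' := by
    intro s hs s' hs' h
    have h1 := leaf_unique _ (lf_leaf s hs) s (lf_adj s hs).symm
    have h2 := leaf_unique _ (lf_leaf s' hs') s' (lf_adj s' hs').symm
    rw [h] at h1
    exact h1.trans h2.symm
  have f4 : ∀ s ∈ S, s ∉ C → lf s ∈ C := by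
    intro s hs hsC
    exact (hC s (lf s) (lf_adj s hs)).resolve_left hsC
  have f5 : ∀ s ∈ S, s ∉ D → lf s ∈ D := by
    intro s hs hsD
    by_contra h
    obtain ⟨u, hu, hadj⟩ := hD (lf s) h
    have := leaf_unique _ (lf_leaf s hs) u hadj.symm
    have hs2 := leaf_unique _ (lf_leaf s hs) s (lf_adj s hs).symm
    rw [this, ← hs2] at hu
    exact hsD hu
  have f6 : ∀ s ∈ S, lf s ∈ S → s ∈ L := by
    intro s hs h
    have h1 := lf_adj _ h
    have h2 := leaf_unique _ (lf_leaf s hs) (lf (lf s)) h1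
    have h3 := leaf_unique _ (lf_leaf s hs) s (lf_adj s hs).symm
    have := lf_leaf _ h
    rw [h2, ← h3] at this
    exact this
  -- leaf's neighbour is a support
  have nb_supp : ∀ v ∈ L, nb v ∈ S := by
    intro v hv
    exact ⟨v, (hnb v).symm, hv⟩
  -- bad set
  set B : Set V := {v | v ∈ C ∧ ∀ u, G.Adj v u → u ∉ C ∧ u ∉ S ∧ u ∉ L ∧ u ∉ D}
    with hBdef
  have hB_C : ∀ b ∈ B, b ∈ C := fun b hb => hb.1
  have hB_D : ∀ b ∈ B, b ∈ D := by
    intro b hb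
    by_contra h
    obtain ⟨u, hu, hadj⟩ := hD b h
    exact ((hb.2 u hadj.symm).2.2.2) hu
  have hB_nS : ∀ b ∈ B, b ∉ S := by
    intro b hb hbs
    exact (hb.2 (lf b) (lf_adj b hbs)).2.2.1 (lf_leaf b hbs)
  have hB_nL : ∀ b ∈ B, b ∉ L := by
    intro b hb hbl
    exact (hb.2 (nb b) (hnb b)).2.1 (nb_supp b hbl)
  have hU : ∀ b ∈ B, nb b ∉ C ∧ nb b ∉ S ∧ nb b ∉ L ∧ nb b ∉ D :=
    fun b hb => hb.2 (nb b) (hnb b)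
  -- inverse choice for U
  let invB : V → V := fun x => if h : ∃ b, b ∈ B ∧ nb b = x then h.choose else x
  have invB_spec : ∀ x, (∃ b, b ∈ B ∧ nb b = x) → invB x ∈ B ∧ nb (invB x) = x := by
    intro x h
    simp only [invB, dif_pos h]
    exact h.choose_spec
  -- the double dominating set
  set D' : Set V := C ∪ S ∪ L ∪ D ∪ (nb '' B) with hD'def
  have two_le : ∀ (T : Set V) (a b : V), a ≠ b → a ∈ T → b ∈ T → 2 ≤ T.ncard := by
    intro T a b hab ha hb
    have h2 := Set.ncard_le_ncard (Set.pair_subset ha hb) T.toFinite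
    rwa [Set.ncard_pair hab] at h2
  have hDD : IsDoubleDomSet G D' := by
    intro v
    by_cases hvL : v ∈ L
    · refine two_le _ v (nb v) (hnb v).ne ?_ ?_
      · exact ⟨Set.mem_insert _ _, Or.inl (Or.inl (Or.inr hvL))⟩
      · exact ⟨Set.mem_insert_of_mem _ (hnb v), Or.inl (Or.inl (Or.inl (Or.inr (nb_supp v hvL))))⟩
    · by_cases hvC : v ∈ C
      · -- v ∈ C : need a neighbour in D'
        by_cases hgood : ∃ u, G.Adj v u ∧ (u ∈ C ∨ u ∈ S ∨ u ∈ L ∨ u ∈ D)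
        · obtain ⟨u, hadj, hu⟩ := hgood
          refine two_le _ v u hadj.ne ?_ ?_
          · exact ⟨Set.mem_insert _ _, Or.inl (Or.inl (Or.inl (Or.inl hvC)))⟩
          · refine ⟨Set.mem_insert_of_mem _ hadj, ?_⟩
            rcases hu with h | h | h | h
            · exact Or.inl (Or.inl (Or.inl (Or.inl h)))
            · exact Or.inl (Or.inl (Or.inl (Or.inr h)))
            · exact Or.inl (Or.inl (Or.inr h))
            · exact Or.inl (Or.inr h)
        · have hvB : v ∈ B := by
            push_neg at hgood
            exact ⟨hvC, fun u hadj => by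
              have h := hgood u hadj
              exact ⟨h.1, h.2.1, h.2.2.1, h.2.2.2⟩⟩
          refine two_le _ v (nb v) (hnb v).ne ?_ ?_
          · exact ⟨Set.mem_insert _ _, Or.inl (Or.inl (Or.inl (Or.inl hvC)))⟩
          · exact ⟨Set.mem_insert_of_mem _ (hnb v), Or.inr ⟨v, hvB, rfl⟩⟩
      · -- v ∉ C ∪ L : all ≥2 neighbours are in C
        have hsub : G.neighborSet v ⊆ closedNbhd G v ∩ D' := by
          intro u hu
          refine ⟨Set.mem_insert_of_mem _ hu, ?_⟩
          have := (hC v u hu).resolve_left hvC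
          exact Or.inl (Or.inl (Or.inl (Or.inl this)))
        have hge : 2 ≤ (G.neighborSet v).ncard := by
          have h0 : (G.neighborSet v).ncard ≠ 0 := by
            intro h
            have := (Set.ncard_eq_zero (G.neighborSet v).toFinite).mp h
            exact absurd (hnb v) (by rw [← SimpleGraph.mem_neighborSet, this]; exact not_false)
          have h1 : (G.neighborSet v).ncard ≠ 1 := hvL
          omega
        calc 2 ≤ (G.neighborSet v).ncard := hge
          _ ≤ _ := Set.ncard_le_ncard hsub (Set.toFinite _)
  -- cardinality bound : |D'| + |S| ≤ |C| + |D| + |L|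
  have hcard : D'.ncard + S.ncard ≤ C.ncard + D.ncard + L.ncard := by
    have hD'f : D'.Finite := Set.toFinite _
    have hSf : S.Finite := Set.toFinite _
    have hCf : C.Finite := Set.toFinite _
    have hDf : D.Finite := Set.toFinite _
    have hLf : L.Finite := Set.toFinite _
    set dom : Finset (V ⊕ V) := hD'f.toFinset.disjSum hSf.toFinset with hdom
    set tgt : Finset (V ⊕ (V ⊕ V)) := hCf.toFinset.disjSum (hDf.toFinset.disjSum hLf.toFinset)
      with htgt
    set c : V → V ⊕ (V ⊕ V) := Sum.inl with hc
    set d : V → V ⊕ (V ⊕ V) := fun x => Sum.inr (Sum.inl x) with hd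
    set l : V → V ⊕ (V ⊕ V) := fun x => Sum.inr (Sum.inr x) with hl
    set f : V ⊕ V → V ⊕ (V ⊕ V) := fun z =>
      match z with
      | Sum.inl x =>
          if x ∈ C then c x
          else if x ∈ L then l x
          else if x ∈ D then d x
          else if x ∈ S then l (lf x)
          else d (invB x)
      | Sum.inr s =>
          if s ∈ C ∧ s ∈ D then d s
          else if lf s ∈ C ∧ (s ∈ C ∨ s ∈ L ∨ s ∈ D) then l (lf s)
          else d (lf s) with hf
    -- membership in B-image for leftover elements of D'
    have hres : ∀ x ∈ D', x ∉ C → x ∉ L → x ∉ D → x ∉ S → ∃ b, b ∈ B ∧ nb b = x := by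
      intro x hx h1 h2 h3 h4
      rcases hx with ((((h|h)|h)|h)|h)
      · exact absurd h h1
      · exact absurd h h4
      · exact absurd h h2
      · exact absurd h h3
      · obtain ⟨b, hb, hbe⟩ := h
        exact ⟨b, hb, hbe⟩
    -- branch3 of inr : lf s ∈ D
    have hr3D : ∀ s ∈ S, ¬(s ∈ C ∧ s ∈ D) → ¬(lf s ∈ C ∧ (s ∈ C ∨ s ∈ L ∨ s ∈ D)) →
        lf s ∈ D := by
      intro s hs hc1 hc2
      by_cases hsD : s ∈ D
      · have hsC : s ∉ C := fun h => hc1 ⟨h, hsD⟩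
        exact absurd ⟨f4 s hs hsC, Or.inr (Or.inr hsD)⟩ hc2
      · exact f5 s hs hsD
    have hmaps : ∀ z ∈ dom, f z ∈ tgt := by
      intro z hz
      match z with
      | Sum.inl x =>
        have hx : x ∈ D' := by
          rw [hdom, Finset.inl_mem_disjSum, Set.Finite.mem_toFinset] at hz
          exact hz
        simp only [hf]
        split_ifs with h1 h2 h3 h4
        · exact Finset.inl_mem_disjSum.mpr (hCf.mem_toFinset.mpr h1)
        · exact Finset.inr_mem_disjSum.mpr
            (Finset.inr_mem_disjSum.mpr (hLf.mem_toFinset.mpr h2))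
        · exact Finset.inr_mem_disjSum.mpr
            (Finset.inl_mem_disjSum.mpr (hDf.mem_toFinset.mpr h3))
        · exact Finset.inr_mem_disjSum.mpr
            (Finset.inr_mem_disjSum.mpr (hLf.mem_toFinset.mpr (lf_leaf x h4)))
        · obtain ⟨hb, hbe⟩ := invB_spec x (hres x hx h1 h2 h3 h4)
          exact Finset.inr_mem_disjSum.mpr
            (Finset.inl_mem_disjSum.mpr (hDf.mem_toFinset.mpr (hB_D _ hb)))
      | Sum.inr s =>
        have hs : s ∈ S := by
          rw [hdom, Finset.inr_mem_disjSum, Set.Finite.mem_toFinset] at hz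
          exact hz
        simp only [hf]
        split_ifs with h1 h2
        · exact Finset.inr_mem_disjSum.mpr
            (Finset.inl_mem_disjSum.mpr (hDf.mem_toFinset.mpr h1.2))
        · exact Finset.inr_mem_disjSum.mpr
            (Finset.inr_mem_disjSum.mpr (hLf.mem_toFinset.mpr (lf_leaf s hs)))
        · exact Finset.inr_mem_disjSum.mpr
            (Finset.inl_mem_disjSum.mpr (hDf.mem_toFinset.mpr (hr3D s hs h1 h2)))
    have hinj : Set.InjOn f dom := by
      intro a ha b hb heq
      rcases a with x | s <;> rcases b with y | s'
      · -- inl / inl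
        have hx : x ∈ D' := hD'f.mem_toFinset.mp (Finset.inl_mem_disjSum.mp (Finset.mem_coe.mp ha))
        have hy : y ∈ D' := hD'f.mem_toFinset.mp (Finset.inl_mem_disjSum.mp (Finset.mem_coe.mp hb))
        simp only [hf] at heq
        split_ifs at heq <;>
          simp only [hc, hd, hl, Sum.inl.injEq, Sum.inr.injEq, reduceCtorEq] at heq
        · exact congrArg _ heq
        · exact congrArg _ heq
        · exact absurd (show x ∈ C by rw [heq]; exact f4 y ‹y ∈ S› ‹y ∉ C›) ‹x ∉ C›
        · exact congrArg _ heq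
        · obtain ⟨hbm, -⟩ := invB_spec y (hres y hy ‹y ∉ C› ‹y ∉ L› ‹y ∉ D› ‹y ∉ S›)
          exact absurd (show x ∈ C by rw [heq]; exact hB_C _ hbm) ‹x ∉ C›
        · exact absurd (show y ∈ C by rw [← heq]; exact f4 x ‹x ∈ S› ‹x ∉ C›) ‹y ∉ C›
        · exact congrArg _ (lf_inj x ‹x ∈ S› y ‹y ∈ S› heq)
        · obtain ⟨hbm, -⟩ := invB_spec x (hres x hx ‹x ∉ C› ‹x ∉ L› ‹x ∉ D› ‹x ∉ S›)
          exact absurd (show y ∈ C by rw [← heq]; exact hB_C _ hbm) ‹y ∉ C›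
        · obtain ⟨hbx, hex⟩ := invB_spec x (hres x hx ‹x ∉ C› ‹x ∉ L› ‹x ∉ D› ‹x ∉ S›)
          obtain ⟨hby, hey⟩ := invB_spec y (hres y hy ‹y ∉ C› ‹y ∉ L› ‹y ∉ D› ‹y ∉ S›)
          exact congrArg _ (by rw [← hex, ← hey, heq])
      · -- inl / inr
        have hx : x ∈ D' := hD'f.mem_toFinset.mp (Finset.inl_mem_disjSum.mp (Finset.mem_coe.mp ha))
        have hs' : s' ∈ S := hSf.mem_toFinset.mp (Finset.inr_mem_disjSum.mp (Finset.mem_coe.mp hb))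
        simp only [hf] at heq
        split_ifs at heq <;>
          simp only [hc, hd, hl, Sum.inl.injEq, Sum.inr.injEq, reduceCtorEq] at heq
        · exact absurd (show x ∈ C by
            rw [heq]; exact ‹lf s' ∈ C ∧ (s' ∈ C ∨ s' ∈ L ∨ s' ∈ D)›.1) ‹x ∉ C›
        · exact absurd (show x ∈ C by rw [heq]; exact ‹s' ∈ C ∧ s' ∈ D›.1) ‹x ∉ C›
        · exact absurd (show x ∈ L by rw [heq]; exact lf_leaf s' hs') ‹x ∉ L›
        · have hxs : x = s' := lf_inj x ‹x ∈ S› s' hs' heq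
          rcases ‹lf s' ∈ C ∧ (s' ∈ C ∨ s' ∈ L ∨ s' ∈ D)›.2 with h | h | h
          · exact absurd (hxs ▸ h) ‹x ∉ C›
          · exact absurd (hxs ▸ h) ‹x ∉ L›
          · exact absurd (hxs ▸ h) ‹x ∉ D›
        · obtain ⟨hbm, -⟩ := invB_spec x (hres x hx ‹x ∉ C› ‹x ∉ L› ‹x ∉ D› ‹x ∉ S›)
          have h2 := hB_nS _ hbm
          rw [heq] at h2
          exact absurd hs' h2
        · obtain ⟨hbm, -⟩ := invB_spec x (hres x hx ‹x ∉ C› ‹x ∉ L› ‹x ∉ D› ‹x ∉ S›)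
          have h2 := hB_nL _ hbm
          rw [heq] at h2
          exact absurd (lf_leaf s' hs') h2
      · -- inr / inl
        have hs : s ∈ S := hSf.mem_toFinset.mp (Finset.inr_mem_disjSum.mp (Finset.mem_coe.mp ha))
        have hy : y ∈ D' := hD'f.mem_toFinset.mp (Finset.inl_mem_disjSum.mp (Finset.mem_coe.mp hb))
        simp only [hf] at heq
        split_ifs at heq <;>
          simp only [hc, hd, hl, Sum.inl.injEq, Sum.inr.injEq, reduceCtorEq] at heq
        · exact absurd (show y ∈ C by rw [← heq]; exact ‹s ∈ C ∧ s ∈ D›.1) ‹y ∉ C›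
        · obtain ⟨hbm, -⟩ := invB_spec y (hres y hy ‹y ∉ C› ‹y ∉ L› ‹y ∉ D› ‹y ∉ S›)
          have h2 := hB_nS _ hbm
          rw [← heq] at h2
          exact absurd hs h2
        · exact absurd (show y ∈ C by
            rw [← heq]; exact ‹lf s ∈ C ∧ (s ∈ C ∨ s ∈ L ∨ s ∈ D)›.1) ‹y ∉ C›
        · have hys : y = s := lf_inj y ‹y ∈ S› s hs heq.symm
          rcases ‹lf s ∈ C ∧ (s ∈ C ∨ s ∈ L ∨ s ∈ D)›.2 with h | h | h
          · exact absurd (hys ▸ h) ‹y ∉ C›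
          · exact absurd (hys ▸ h) ‹y ∉ L›
          · exact absurd (hys ▸ h) ‹y ∉ D›
        · exact absurd (show y ∈ L by rw [← heq]; exact lf_leaf s hs) ‹y ∉ L›
        · obtain ⟨hbm, -⟩ := invB_spec y (hres y hy ‹y ∉ C› ‹y ∉ L› ‹y ∉ D› ‹y ∉ S›)
          have h2 := hB_nL _ hbm
          rw [← heq] at h2
          exact absurd (lf_leaf s hs) h2
      · -- inr / inr
        have hs : s ∈ S := hSf.mem_toFinset.mp (Finset.inr_mem_disjSum.mp (Finset.mem_coe.mp ha))
        have hs' : s' ∈ S := hSf.mem_toFinset.mp (Finset.inr_mem_disjSum.mp (Finset.mem_coe.mp hb))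
        simp only [hf] at heq
        split_ifs at heq <;>
          simp only [hc, hd, hl, Sum.inl.injEq, Sum.inr.injEq, reduceCtorEq] at heq
        · exact congrArg _ heq
        · exfalso
          have h1 : lf s' ∈ C := heq ▸ ‹s ∈ C ∧ s ∈ D›.1
          have h2 : lf s' ∈ S := heq ▸ hs
          have h3 : s' ∈ L := f6 s' hs' h2
          exact ‹¬(lf s' ∈ C ∧ (s' ∈ C ∨ s' ∈ L ∨ s' ∈ D))› ⟨h1, Or.inr (Or.inl h3)⟩
        · exact congrArg _ (lf_inj s hs s' hs' heq)
        · exfalso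
          have h1 : lf s ∈ C := heq ▸ ‹s' ∈ C ∧ s' ∈ D›.1
          have h2 : lf s ∈ S := heq ▸ hs'
          have h3 : s ∈ L := f6 s hs h2
          exact ‹¬(lf s ∈ C ∧ (s ∈ C ∨ s ∈ L ∨ s ∈ D))› ⟨h1, Or.inr (Or.inl h3)⟩
        · exact congrArg _ (lf_inj s hs s' hs' heq)
    have hcards := Finset.card_le_card_of_injOn f hmaps hinj
    rw [hdom, htgt, Finset.card_disjSum, Finset.card_disjSum, Finset.card_disjSum,
      ← Set.ncard_eq_toFinset_card _ hD'f, ← Set.ncard_eq_toFinset_card _ hSf,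
      ← Set.ncard_eq_toFinset_card _ hCf, ← Set.ncard_eq_toFinset_card _ hDf,
      ← Set.ncard_eq_toFinset_card _ hLf] at hcards
    omega
  have h1 : ddomNum G ≤ D'.ncard := Nat.sInf_le ⟨D', hDD, rfl⟩
  rw [hCcard, hDcard] at hcard
  have : ddomNum G + S.ncard ≤ vcNum G + domNum G + L.ncard := by omega
  omega
end

section
/- For every finite simple graph G with no isolated vertex, the double domination number satisfies γ×2(G) ≤ γ₂(G) + γ(G), where γ₂(G) is the 2-domination number and γ(G) is the domination number. -/
/-! Basic domination-type definitions for finite simple graphs. -/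

variable {V : Type*}

/-- For every finite simple graph `G` with no isolated vertex,
`γ×2(G) ≤ γ₂(G) + γ(G)`. -/
theorem stmt4 {V : Type*} [Fintype V] (G : SimpleGraph V)
    (hiso : ∀ v : V, ∃ u : V, G.Adj v u) :
    ddomNum G ≤ twoDomNum G + domNum G := by
  classical
  have hTne : {k | ∃ D : Set V, IsTwoDomSet G D ∧ D.ncard = k}.Nonempty :=
    ⟨_, Set.univ, fun v hv => absurd (Set.mem_univ v) hv, rfl⟩
  have hDne : {k | ∃ D : Set V, IsDomSet G D ∧ D.ncard = k}.Nonempty :=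
    ⟨_, Set.univ, fun v hv => absurd (Set.mem_univ v) hv, rfl⟩
  obtain ⟨D2, hD2, hc2⟩ := Nat.sInf_mem hTne
  obtain ⟨D, hD, hcD⟩ := Nat.sInf_mem hDne
  choose f hf using hiso
  set S : Set V := (D2 ∪ D) ∪ (f '' (D2 ∩ D)) with hSdef
  have hSdd : IsDoubleDomSet G S := by
    intro v
    by_cases hv : v ∈ D2
    · have hvS : v ∈ S := Or.inl (Or.inl hv)
      by_cases hvD : v ∈ D
      · have hfS : f v ∈ S := Or.inr ⟨v, ⟨hv, hvD⟩, rfl⟩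
        have hne : v ≠ f v := G.ne_of_adj (hf v)
        have hsub : ({v, f v} : Set V) ⊆ closedNbhd G v ∩ S := by
          intro x hx
          rcases hx with rfl | hx
          · exact ⟨Or.inl rfl, hvS⟩
          · rcases hx with rfl
            exact ⟨Or.inr (hf v), hfS⟩
        calc 2 = ({v, f v} : Set V).ncard := (Set.ncard_pair hne).symm
          _ ≤ _ := Set.ncard_le_ncard hsub (Set.toFinite _)
      · obtain ⟨u, huD, hadj⟩ := hD v hvD
        have huS : u ∈ S := Or.inl (Or.inr huD)
        have hne : v ≠ u := (G.ne_of_adj hadj).symm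
        have hsub : ({v, u} : Set V) ⊆ closedNbhd G v ∩ S := by
          intro x hx
          rcases hx with rfl | hx
          · exact ⟨Or.inl rfl, hvS⟩
          · rcases hx with rfl
            exact ⟨Or.inr hadj.symm, huS⟩
        calc 2 = ({v, u} : Set V).ncard := (Set.ncard_pair hne).symm
          _ ≤ _ := Set.ncard_le_ncard hsub (Set.toFinite _)
    · have h2 := hD2 v hv
      have hsub : G.neighborSet v ∩ D2 ⊆ closedNbhd G v ∩ S := by
        rintro x ⟨hx1, hx2⟩
        exact ⟨Or.inr hx1, Or.inl (Or.inl hx2)⟩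
      exact h2.trans (Set.ncard_le_ncard hsub (Set.toFinite _))
  have hcard : S.ncard ≤ D2.ncard + D.ncard := by
    have h1 : S.ncard ≤ (D2 ∪ D).ncard + (f '' (D2 ∩ D)).ncard :=
      Set.ncard_union_le _ _
    have h2 : (f '' (D2 ∩ D)).ncard ≤ (D2 ∩ D).ncard := Set.ncard_image_le
    have h3 : (D2 ∪ D).ncard + (D2 ∩ D).ncard = D2.ncard + D.ncard :=
      Set.ncard_union_add_ncard_inter D2 D
    omega
  have hle : ddomNum G ≤ S.ncard := Nat.sInf_le ⟨S, hSdd, rfl⟩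
  unfold twoDomNum domNum
  omega
end

section
/- For every finite simple claw-free graph G with no isolated vertex, the double domination number satisfies γ×2(G) ≤ γt(G) + γ(G), where γt(G) is the total domination number and γ(G) is the domination number. -/
/-! Basic domination-type definitions for finite simple graphs. -/

variable {V : Type*}

/-- For every finite simple claw-free graph `G` with no isolated vertex,
`γ×2(G) ≤ γt(G) + γ(G)`. -/
theorem stmt5 {V : Type*} [Fintype V] (G : SimpleGraph V)
    (hiso : ∀ v : V, ∃ u : V, G.Adj v u)
    (hclawfree : ∀ v a b c : V, G.Adj v a → G.Adj v b → G.Adj v c →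
      a ≠ b → a ≠ c → b ≠ c → ¬ G.Adj a b → ¬ G.Adj a c → ¬ G.Adj b c → False) :
    ddomNum G ≤ totalDomNum G + domNum G := by
  classical
  -- obtain minimum total dominating set T and dominating set D
  have hTne : {k | ∃ D : Set V, IsTotalDomSet G D ∧ D.ncard = k}.Nonempty :=
    ⟨(Set.univ : Set V).ncard, Set.univ, fun v => by
      obtain ⟨u, hu⟩ := hiso v; exact ⟨u, trivial, hu.symm⟩, rfl⟩
  have hDne : {k | ∃ D : Set V, IsDomSet G D ∧ D.ncard = k}.Nonempty :=
    ⟨(Set.univ : Set V).ncard, Set.univ, fun v hv => absurd trivial hv, rfl⟩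
  obtain ⟨T, hT, hTcard⟩ := Nat.sInf_mem hTne
  obtain ⟨D, hD, hDcard⟩ := Nat.sInf_mem hDne
  -- bad vertices for u
  set Bad : V → Set V := fun u =>
    {v | v ∉ T ∪ D ∧ G.neighborSet v ∩ (T ∪ D) = {u}} with hBad
  set r : V → V := fun u =>
    if h : (Bad u).Nonempty then h.choose else u with hr
  set U : Set V := (T ∩ D) ∩ {u | (Bad u).Nonempty} with hU
  set S : Set V := (T ∪ D) ∪ r '' U with hS
  have hrmem : ∀ u ∈ U, r u ∈ Bad u := by
    intro u hu
    have h : (Bad u).Nonempty := hu.2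
    simp only [hr, dif_pos h]
    exact h.choose_spec
  -- S is a double dominating set
  have hSdd : IsDoubleDomSet G S := by
    intro v
    rw [show (2 : ℕ) = 1 + 1 by rfl, Nat.add_one_le_iff, Set.one_lt_ncard (Set.toFinite _)]
    by_cases hvTD : v ∈ T ∪ D
    · obtain ⟨t, htT, htv⟩ := hT v
      exact ⟨v, ⟨Set.mem_insert _ _, Or.inl hvTD⟩,
        t, ⟨Set.mem_insert_of_mem _ htv.symm, Or.inl (Or.inl htT)⟩, htv.ne'⟩
    · obtain ⟨t, htT, htv⟩ := hT v
      have hvD : v ∉ D := fun h => hvTD (Or.inr h)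
      obtain ⟨d, hdD, hdv⟩ := hD v hvD
      by_cases htd : t = d
      · -- all neighbours in T∪D equal t, or there are two
        by_cases h2 : ∃ x ∈ G.neighborSet v ∩ (T ∪ D), x ≠ t
        · obtain ⟨x, ⟨hx1, hx2⟩, hxt⟩ := h2
          exact ⟨x, ⟨Set.mem_insert_of_mem _ hx1, Or.inl hx2⟩,
            t, ⟨Set.mem_insert_of_mem _ htv.symm, Or.inl (Or.inl htT)⟩, hxt⟩
        · push_neg at h2
          have hsingle : G.neighborSet v ∩ (T ∪ D) = {t} := by
            apply Set.eq_singleton_iff_unique_mem.mpr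
            exact ⟨⟨htv.symm, Or.inl htT⟩, fun x hx => h2 x hx⟩
          have hvBad : v ∈ Bad t := ⟨hvTD, hsingle⟩
          have htU : t ∈ U := ⟨⟨htT, htd ▸ hdD⟩, ⟨v, hvBad⟩⟩
          have hrt := hrmem t htU
          by_cases hrv : r t = v
          · exact ⟨v, ⟨Set.mem_insert _ _, Or.inr ⟨t, htU, hrv⟩⟩,
              t, ⟨Set.mem_insert_of_mem _ htv.symm, Or.inl (Or.inl htT)⟩,
              fun h => hvTD (h ▸ Or.inl htT)⟩
          · -- claw-free argument: v and r t are adjacent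
            obtain ⟨w, hwT, hwt⟩ := hT t
            have hrtTD : r t ∉ T ∪ D := hrt.1
            have hrtsingle : G.neighborSet (r t) ∩ (T ∪ D) = {t} := hrt.2
            have hAdjtrt : G.Adj t (r t) := by
              have : t ∈ G.neighborSet (r t) ∩ (T ∪ D) := hrtsingle ▸ rfl
              exact this.1.symm
            have hvw : ¬ G.Adj v w := by
              intro h
              have : w ∈ G.neighborSet v ∩ (T ∪ D) := ⟨h, Or.inl hwT⟩
              rw [hsingle] at this
              exact hwt.ne this
            have hrtw : ¬ G.Adj (r t) w := by
              intro h
              have : w ∈ G.neighborSet (r t) ∩ (T ∪ D) := ⟨h, Or.inl hwT⟩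
              rw [hrtsingle] at this
              exact hwt.ne this
            have hAdjvrt : G.Adj v (r t) := by
              by_contra hcon
              exact hclawfree t v (r t) w htv hAdjtrt hwt.symm
                (fun h => hrv h.symm) (fun h => (h ▸ hvTD) (Or.inl hwT))
                (fun h => (h ▸ hrtTD) (Or.inl hwT)) hcon hvw hrtw
            exact ⟨r t, ⟨Set.mem_insert_of_mem _ hAdjvrt,
                Or.inr ⟨t, htU, rfl⟩⟩,
              t, ⟨Set.mem_insert_of_mem _ htv.symm, Or.inl (Or.inl htT)⟩,
              fun h => hrtTD (Or.inl (by rw [h]; exact htT))⟩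
      · exact ⟨t, ⟨Set.mem_insert_of_mem _ htv.symm, Or.inl (Or.inl htT)⟩,
          d, ⟨Set.mem_insert_of_mem _ hdv.symm, Or.inl (Or.inr hdD)⟩, htd⟩
  -- cardinality bound
  have hcard : S.ncard ≤ T.ncard + D.ncard := by
    calc S.ncard ≤ (T ∪ D).ncard + (r '' U).ncard := Set.ncard_union_le _ _
    _ ≤ (T ∪ D).ncard + (T ∩ D).ncard := by
        exact Nat.add_le_add_left (le_trans (Set.ncard_image_le (Set.toFinite _))
          (Set.ncard_le_ncard Set.inter_subset_left (Set.toFinite _))) _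
    _ = T.ncard + D.ncard := Set.ncard_union_add_ncard_inter _ _
  calc ddomNum G ≤ S.ncard := Nat.sInf_le ⟨S, hSdd, rfl⟩
  _ ≤ T.ncard + D.ncard := hcard
  _ = totalDomNum G + domNum G := by rw [hTcard, hDcard]; rfl
end

section
/- For all integers t ≥ 2 and 1 ≤ r ≤ t − 1, the graph G_{t,r} satisfies γ×2(G_{t,r}) = 2t − r + 2, i.e., the minimum cardinality of a double dominating set of G_{t,r} equals 2t − r + 2. -/
/-! Basic domination-type definitions for finite simple graphs. -/

variable {V : Type*}

/-- The graph `G_{t,r}`: two stars `K_{1,t}` with support vertices `u = (false, none)`,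
`u' = (true, none)` and leaves `vᵢ = (false, some i)`, `vᵢ' = (true, some i)`,
together with the edge `uu'` and the edges `vᵢvᵢ'` for the first `r` indices. -/
def Gtr (t r : ℕ) : SimpleGraph (Bool × Option (Fin t)) :=
  SimpleGraph.fromRel (fun x y =>
    (x.1 = y.1 ∧ x.2 = none ∧ y.2 ≠ none) ∨
    (x.2 = none ∧ y.2 = none) ∨
    (x.1 ≠ y.1 ∧ ∃ i : Fin t, x.2 = some i ∧ y.2 = some i ∧ i.val < r))

section GtrAux

variable {t r : ℕ}

/-- The explicit minimum double dominating set. -/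
def D0 (t r : ℕ) : Set (Bool × Option (Fin t)) :=
  {x | x.2 = none ∨ ∃ i : Fin t, x.2 = some i ∧ (x.1 = false ∨ r ≤ i.val)}

lemma gtr_adj_uu' : (Gtr t r).Adj (false, none) (true, none) := by
  simp [Gtr, SimpleGraph.fromRel_adj]

lemma gtr_adj_star (b : Bool) (i : Fin t) : (Gtr t r).Adj (b, none) (b, some i) := by
  simp [Gtr, SimpleGraph.fromRel_adj]

lemma gtr_adj_cross (i : Fin t) (hi : i.val < r) :
    (Gtr t r).Adj (false, some i) (true, some i) := by
  simp only [Gtr, SimpleGraph.fromRel_adj, ne_eq, Prod.mk.injEq]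
  exact ⟨by simp, Or.inl (Or.inr (Or.inr ⟨by simp, i, rfl, rfl, hi⟩))⟩

lemma gtr_nbhd_leaf (b : Bool) (i : Fin t) (hi : r ≤ i.val) :
    (Gtr t r).neighborSet (b, some i) = {(b, none)} := by
  ext ⟨c, o⟩
  simp only [SimpleGraph.mem_neighborSet, Gtr, SimpleGraph.fromRel_adj,
    Set.mem_singleton_iff, Prod.mk.injEq, ne_eq, Prod.ext_iff]
  constructor
  · rintro ⟨hne, h | h⟩
    · rcases h with ⟨_, h2, _⟩ | ⟨h1, h2⟩ | ⟨_, j, hj1, hj2, hj3⟩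
      · simp at h2
      · simp at h1
      · simp at hj1 hj2; omega
    · rcases h with ⟨h1, h2, _⟩ | ⟨h1, h2⟩ | ⟨_, j, hj1, hj2, hj3⟩
      · exact ⟨h1, h2⟩
      · simp at h2
      · simp at hj2; omega
  · rintro ⟨hc, ho⟩
    subst hc; subst ho
    exact ⟨by simp, Or.inr (Or.inl ⟨rfl, rfl, by simp⟩)⟩

lemma gtr_nbhd_inner (b : Bool) (i : Fin t) (hi : i.val < r) :
    (Gtr t r).neighborSet (b, some i) = {(b, none), (!b, some i)} := by
  ext ⟨c, o⟩
  simp only [SimpleGraph.mem_neighborSet, Gtr, SimpleGraph.fromRel_adj,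
    Set.mem_insert_iff, Set.mem_singleton_iff, Prod.mk.injEq, ne_eq, Prod.ext_iff]
  constructor
  · rintro ⟨hne, h | h⟩
    · rcases h with ⟨_, h2, _⟩ | ⟨h1, h2⟩ | ⟨hb, j, hj1, hj2, hj3⟩
      · simp at h2
      · simp at h1
      · simp at hj1; subst hj1
        refine Or.inr ⟨?_, hj2⟩
        cases b <;> cases c <;> simp_all
    · rcases h with ⟨h1, h2, _⟩ | ⟨h1, h2⟩ | ⟨hb, j, hj1, hj2, hj3⟩
      · exact Or.inl ⟨h1, h2⟩
      · simp at h2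
      · simp at hj2; subst hj2
        refine Or.inr ⟨?_, hj1⟩
        cases b <;> cases c <;> simp_all
  · rintro (⟨hc, ho⟩ | ⟨hc, ho⟩)
    · subst hc; subst ho
      exact ⟨by simp, Or.inr (Or.inl ⟨rfl, rfl, by simp⟩)⟩
    · subst hc; subst ho
      cases b
      · exact ⟨by simp, Or.inl (Or.inr (Or.inr ⟨by simp, i, rfl, rfl, hi⟩))⟩
      · exact ⟨by simp, Or.inr (Or.inr (Or.inr ⟨by simp, i, rfl, rfl, hi⟩))⟩

lemma compl_D0 (hrt : r < t) :
    (D0 t r)ᶜ =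
      (fun j : Fin r => ((true : Bool), some (Fin.castLE hrt.le j))) '' Set.univ := by
  ext ⟨c, o⟩
  simp only [D0, Set.mem_compl_iff, Set.mem_setOf_eq, Set.image_univ, Set.mem_range,
    Prod.mk.injEq]
  cases o with
  | none => simp
  | some i =>
    cases c
    · simp
    · simp only [Option.some.injEq, not_or, not_exists]
      constructor
      · intro ⟨_, h⟩
        have := h i
        simp at this
        exact ⟨⟨i, by omega⟩, by simp, by ext; simp⟩
      · rintro ⟨j, _, hj⟩
        have hj' : (Fin.castLE hrt.le j : Fin t) = i := by exact_mod_cast hj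
        have : i.val < r := by rw [← hj']; exact j.isLt
        refine ⟨by simp, fun k hk => ?_⟩
        obtain ⟨hk1, hk2⟩ := hk
        subst hk1
        rcases hk2 with h | h
        · simp at h
        · omega

lemma card_D0 (hrt : r < t) : (D0 t r).ncard = 2 * t - r + 2 := by
  have h := Set.ncard_add_ncard_compl (D0 t r)
  rw [compl_D0 hrt, Set.ncard_image_of_injective _ (by
      intro a b hab
      simpa [Fin.ext_iff] using hab), Set.ncard_univ] at h
  simp only [Nat.card_eq_fintype_card, Fintype.card_fin, Fintype.card_prod,
    Fintype.card_bool, Fintype.card_option] at h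
  omega

lemma two_le_of_pair {s : Set (Bool × Option (Fin t))} {a b : Bool × Option (Fin t)}
    (ha : a ∈ s) (hb : b ∈ s) (hab : a ≠ b) : 2 ≤ s.ncard :=
  (Set.one_lt_ncard_iff (Set.toFinite _)).mpr ⟨a, b, ha, hb, hab⟩

lemma D0_double_dom : IsDoubleDomSet (Gtr t r) (D0 t r) := by
  rintro ⟨b, o⟩
  cases o with
  | none =>
    refine two_le_of_pair (a := (false, none)) (b := (true, none)) ?_ ?_ (by simp)
    · cases b
      · exact ⟨Set.mem_insert _ _, Or.inl rfl⟩
      · exact ⟨Set.mem_insert_of_mem _ gtr_adj_uu'.symm, Or.inl rfl⟩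
    · cases b
      · exact ⟨Set.mem_insert_of_mem _ gtr_adj_uu', Or.inl rfl⟩
      · exact ⟨Set.mem_insert _ _, Or.inl rfl⟩
  | some i =>
    cases b
    · refine two_le_of_pair (a := (false, some i)) (b := (false, none)) ?_ ?_ (by simp)
      · exact ⟨Set.mem_insert _ _, Or.inr ⟨i, rfl, Or.inl rfl⟩⟩
      · exact ⟨Set.mem_insert_of_mem _ (gtr_adj_star false i).symm, Or.inl rfl⟩
    · by_cases hi : i.val < r
      · refine two_le_of_pair (a := (true, none)) (b := (false, some i)) ?_ ?_ (by simp)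
        · exact ⟨Set.mem_insert_of_mem _ (gtr_adj_star true i).symm, Or.inl rfl⟩
        · exact ⟨Set.mem_insert_of_mem _ (gtr_adj_cross i hi).symm, Or.inr ⟨i, rfl, Or.inl rfl⟩⟩
      · refine two_le_of_pair (a := (true, some i)) (b := (true, none)) ?_ ?_ (by simp)
        · exact ⟨Set.mem_insert _ _, Or.inr ⟨i, rfl, Or.inr (Nat.le_of_not_lt hi)⟩⟩
        · exact ⟨Set.mem_insert_of_mem _ (gtr_adj_star true i).symm, Or.inl rfl⟩

lemma gtr_lower (hrt : r < t) {D : Set (Bool × Option (Fin t))}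
    (hD : IsDoubleDomSet (Gtr t r) D) : 2 * t - r + 2 ≤ D.ncard := by
  classical
  -- leaves with index ≥ r force both endpoints into D
  have hleaf : ∀ (b : Bool) (i : Fin t), r ≤ i.val → (b, some i) ∈ D ∧ (b, none) ∈ D := by
    intro b i hi
    have h2 := hD (b, some i)
    have hcn : closedNbhd (Gtr t r) (b, some i) = {(b, some i), (b, none)} := by
      rw [closedNbhd, gtr_nbhd_leaf b i hi]
    have hsub : closedNbhd (Gtr t r) (b, some i) ∩ D ⊆ closedNbhd (Gtr t r) (b, some i) :=
      Set.inter_subset_left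
    have hle : (closedNbhd (Gtr t r) (b, some i)).ncard ≤ 2 := by
      rw [hcn]
      exact (Set.ncard_insert_le _ _).trans (by simp)
    have heq : closedNbhd (Gtr t r) (b, some i) ∩ D = closedNbhd (Gtr t r) (b, some i) :=
      Set.eq_of_subset_of_ncard_le hsub (hle.trans (h2)) (Set.toFinite _)
    have h1 : (b, some i) ∈ closedNbhd (Gtr t r) (b, some i) ∩ D := by
      rw [heq, hcn]; simp
    have h2' : (b, none) ∈ closedNbhd (Gtr t r) (b, some i) ∩ D := by
      rw [heq, hcn]; simp
    exact ⟨h1.2, h2'.2⟩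
  have hlast : r ≤ (⟨t - 1, by omega⟩ : Fin t).val := by simp; omega
  have hu : ((false : Bool), (none : Option (Fin t))) ∈ D := (hleaf false _ hlast).2
  have hu' : ((true : Bool), (none : Option (Fin t))) ∈ D := (hleaf true _ hlast).2
  -- inner leaves: at least one of the pair in D
  have hpair : ∀ i : Fin t, i.val < r → (false, some i) ∈ D ∨ (true, some i) ∈ D := by
    intro i hi
    by_contra hcon
    push_neg at hcon
    have h2 := hD (false, some i)
    have hcn : closedNbhd (Gtr t r) (false, some i) =
        {(false, some i), (false, none), (true, some i)} := by
      rw [closedNbhd, gtr_nbhd_inner false i hi]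
      simp [Set.insert_comm]
    have hsub : closedNbhd (Gtr t r) (false, some i) ∩ D ⊆ {((false : Bool), (none : Option (Fin t)))} := by
      rintro ⟨c, o⟩ ⟨hmem, hmemD⟩
      rw [hcn] at hmem
      rcases hmem with h | h | h
      · exact absurd (h ▸ hmemD) hcon.1
      · exact h
      · exact absurd (h ▸ hmemD) hcon.2
    have hle1 : (closedNbhd (Gtr t r) (false, some i) ∩ D).ncard ≤ 1 :=
      (Set.ncard_le_ncard hsub (Set.toFinite _)).trans (by simp)
    omega
  -- choice function
  have hc : ∀ i : Fin t, ∃ x : Bool × Option (Fin t), (i.val < r → x ∈ D ∧ x.2 = some i) := by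
    intro i
    by_cases hi : i.val < r
    · rcases hpair i hi with h | h
      · exact ⟨(false, some i), fun _ => ⟨h, rfl⟩⟩
      · exact ⟨(true, some i), fun _ => ⟨h, rfl⟩⟩
    · exact ⟨(false, some i), fun h => absurd h hi⟩
  choose c hcD using hc
  set φ : Bool × Option (Fin t) → Bool × Option (Fin t) := fun x =>
    match x.2 with
    | none => x
    | some i => if i.val < r then c i else x with hφ
  have hφ_snd : ∀ x, (φ x).2 = x.2 := by
    rintro ⟨b, o⟩
    cases o with
    | none => rfl
    | some i =>
      by_cases hi : i.val < r
      · simp only [hφ, hi, if_true]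
        exact (hcD i hi).2
      · simp [hφ, hi]
  have himg : φ '' D0 t r ⊆ D := by
    rintro _ ⟨⟨b, o⟩, hx, rfl⟩
    cases o with
    | none =>
      show (b, (none : Option (Fin t))) ∈ D
      cases b
      · exact hu
      · exact hu'
    | some i =>
      by_cases hi : i.val < r
      · simpa only [hφ, hi, if_true] using (hcD i hi).1
      · simp only [hφ, hi, if_false]
        rcases hx with h | ⟨j, hj, hbj⟩
        · simp at h
        · simp only [Option.some.injEq] at hj
          subst hj
          exact (hleaf b i (Nat.le_of_not_lt hi)).1
  have hinj : Set.InjOn φ (D0 t r) := by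
    rintro ⟨b, o⟩ hx ⟨b', o'⟩ hy hxy
    have hsnd : o = o' := by
      have := congrArg Prod.snd hxy
      rwa [hφ_snd, hφ_snd] at this
    subst hsnd
    cases o with
    | none => simpa only [hφ] using hxy
    | some i =>
      by_cases hi : i.val < r
      · rcases hx with h | ⟨j, hj, hbj⟩
        · simp at h
        · simp only [Option.some.injEq] at hj; subst hj
          rcases hy with h' | ⟨j', hj', hbj'⟩
          · simp at h'
          · simp only [Option.some.injEq] at hj'; subst hj'
            have hb : b = false := by
              rcases hbj with h | h
              · exact h
              · omega
            have hb' : b' = false := by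
              rcases hbj' with h | h
              · exact h
              · omega
            rw [hb, hb']
      · simpa only [hφ, hi, if_false] using hxy
  calc 2 * t - r + 2 = (D0 t r).ncard := (card_D0 hrt).symm
    _ = (φ '' D0 t r).ncard := (Set.ncard_image_of_injOn hinj).symm
    _ ≤ D.ncard := Set.ncard_le_ncard himg (Set.toFinite _)

end GtrAux

/-- `γ×2(G_{t,r}) = 2t − r + 2`. -/
theorem stmt6 (t r : ℕ) (ht : 2 ≤ t) (hr1 : 1 ≤ r) (hr2 : r ≤ t - 1) :
    ddomNum (Gtr t r) = 2 * t - r + 2 := by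
  have hrt : r < t := by omega
  have hmem : 2 * t - r + 2 ∈ {k | ∃ D : Set (Bool × Option (Fin t)),
      IsDoubleDomSet (Gtr t r) D ∧ D.ncard = k} :=
    ⟨D0 t r, D0_double_dom, card_D0 hrt⟩
  refine le_antisymm (Nat.sInf_le hmem) ?_
  obtain ⟨D, hD, hcard⟩ := Nat.sInf_mem ⟨_, hmem⟩
  rw [ddomNum]
  rw [← hcard]
  exact gtr_lower hrt hD
end

section
/- For all integers t ≥ 2 and 1 ≤ r ≤ t − 1, the graph G_{t,r} satisfies α(G_{t,r}) = 2t − r, i.e., the maximum cardinality of an independent set of G_{t,r} equals 2t − r. -/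
/-! Basic domination-type definitions for finite simple graphs. -/

variable {V : Type*}

lemma gtr_adj {t r : ℕ} {x y : Bool × Option (Fin t)} :
    (Gtr t r).Adj x y ↔ x ≠ y ∧
      (((x.1 = y.1 ∧ x.2 = none ∧ y.2 ≠ none) ∨ (x.2 = none ∧ y.2 = none) ∨
        (x.1 ≠ y.1 ∧ ∃ i : Fin t, x.2 = some i ∧ y.2 = some i ∧ i.val < r)) ∨
       ((y.1 = x.1 ∧ y.2 = none ∧ x.2 ≠ none) ∨ (y.2 = none ∧ x.2 = none) ∨
        (y.1 ≠ x.1 ∧ ∃ i : Fin t, y.2 = some i ∧ x.2 = some i ∧ i.val < r))) := by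
  simp only [Gtr, SimpleGraph.fromRel_adj]

lemma card_ge (t r : ℕ) (hrt : r ≤ t) : ({i : Fin t | r ≤ i.val}).ncard = t - r := by
  have h1 : {i : Fin t | i.val < r} = Set.range (Fin.castLE hrt) := by
    ext i
    constructor
    · intro h; exact ⟨⟨i.val, h⟩, by ext; simp⟩
    · rintro ⟨j, rfl⟩; exact j.isLt
  have h2 : ({i : Fin t | i.val < r}).ncard = r := by
    rw [h1, ← Set.image_univ, Set.ncard_image_of_injective _ (Fin.castLE_injective hrt),
      Set.ncard_univ, Nat.card_eq_fintype_card, Fintype.card_fin]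
  have h3 : {i : Fin t | r ≤ i.val} = {i : Fin t | i.val < r}ᶜ := by
    ext i; simp [not_lt]
  have h4 := Set.ncard_add_ncard_compl {i : Fin t | i.val < r}
  rw [Nat.card_eq_fintype_card, Fintype.card_fin] at h4
  rw [h3]; omega

lemma card_pairs {α : Type*} (t r : ℕ) (hrt : r ≤ t) (f g : Fin t → α)
    (hf : Function.Injective f) (hg : Function.Injective g)
    (hfg : ∀ i j, f i ≠ g j) :
    ((f '' Set.univ) ∪ (g '' {i | r ≤ i.val})).ncard = 2 * t - r := by
  rw [Set.ncard_union_eq]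
  · rw [Set.ncard_image_of_injective _ hf, Set.ncard_image_of_injective _ hg,
      Set.ncard_univ, Nat.card_eq_fintype_card, Fintype.card_fin, card_ge t r hrt]
    omega
  · rw [Set.disjoint_left]
    rintro a ⟨i, -, rfl⟩ ⟨j, -, hj⟩
    exact hfg i j hj.symm

lemma indep_card_le (t r : ℕ) (ht : 2 ≤ t) (hr1 : 1 ≤ r) (hr2 : r ≤ t - 1)
    (S : Set (Bool × Option (Fin t))) (hS : IsIndepSet' (Gtr t r) S) :
    S.ncard ≤ 2 * t - r := by
  have ht0 : 0 < t := by omega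
  by_cases hb : ∃ b : Bool, (b, (none : Option (Fin t))) ∈ S
  · obtain ⟨b, hb⟩ := hb
    have hsub : S ⊆ insert (b, (none : Option (Fin t)))
        ((fun i : Fin t => ((!b, some i) : Bool × Option (Fin t))) '' Set.univ) := by
      rintro ⟨c, o⟩ hx
      match o with
      | none =>
        have hcb : c = b := by
          by_contra hc
          exact hS _ hb _ hx (gtr_adj.mpr ⟨by simp [Ne.symm hc], Or.inl (Or.inr (Or.inl ⟨rfl, rfl⟩))⟩)
        simp [hcb]
      | some i =>
        have hcb : c ≠ b := by
          rintro rfl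
          exact hS _ hb _ hx (gtr_adj.mpr ⟨by simp, Or.inl (Or.inl ⟨rfl, rfl, by simp⟩)⟩)
        have : c = !b := by cases b <;> cases c <;> simp_all
        subst this
        exact Set.mem_insert_of_mem _ ⟨i, trivial, rfl⟩
    have h1 : (insert (b, (none : Option (Fin t)))
        ((fun i : Fin t => ((!b, some i) : Bool × Option (Fin t))) '' Set.univ)).ncard = t + 1 := by
      rw [Set.ncard_insert_of_notMem (by rintro ⟨i, -, h⟩; simp at h),
        Set.ncard_image_of_injective _ (by intro i j h; simpa using h),
        Set.ncard_univ, Nat.card_eq_fintype_card, Fintype.card_fin]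
    calc S.ncard ≤ _ := Set.ncard_le_ncard hsub (Set.toFinite _)
      _ = t + 1 := h1
      _ ≤ 2 * t - r := by omega
  · push_neg at hb
    set T : Set (Bool × Fin t) :=
      ((fun i : Fin t => ((false, i) : Bool × Fin t)) '' Set.univ) ∪
        ((fun i : Fin t => ((true, i) : Bool × Fin t)) '' {i | r ≤ i.val}) with hT
    have hTcard : T.ncard = 2 * t - r := by
      apply card_pairs t r (by omega)
      · intro i j h; simpa using h
      · intro i j h; simpa using h
      · intro i j h; simp at h
    set f : Bool × Option (Fin t) → Bool × Fin t := fun x =>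
      match x with
      | (c, none) => (c, ⟨0, ht0⟩)
      | (c, some i) => if i.val < r then (false, i) else (c, i) with hf
    have hmaps : ∀ x ∈ S, f x ∈ T := by
      rintro ⟨c, o⟩ hx
      match o with
      | none => exact absurd hx (hb c)
      | some i =>
        by_cases hi : i.val < r
        · exact Or.inl ⟨i, trivial, by simp [hf, hi]⟩
        · cases c
          · exact Or.inl ⟨i, trivial, by simp [hf, hi]⟩
          · exact Or.inr ⟨i, by simp only [Set.mem_setOf_eq]; omega, by simp [hf, hi]⟩
    have hinj : Set.InjOn f S := by
      rintro ⟨c, o⟩ hx ⟨d, o'⟩ hy hxy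
      match o, o' with
      | none, _ => exact absurd hx (hb c)
      | some i, none => exact absurd hy (hb d)
      | some i, some j =>
        by_cases hi : i.val < r <;> by_cases hj : j.val < r <;>
          simp only [hf, hi, hj, if_pos, if_neg, Prod.mk.injEq, if_true, if_false] at hxy
        · obtain ⟨-, rfl⟩ := hxy
          have hcd : c = d := by
            by_contra hcd
            exact hS _ hx _ hy (gtr_adj.mpr ⟨by simp [hcd],
              Or.inl (Or.inr (Or.inr ⟨by simpa using hcd, i, rfl, rfl, hi⟩))⟩)
          simp [hcd]
        · obtain ⟨rfl, rfl⟩ := hxy; omega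
        · obtain ⟨rfl, rfl⟩ := hxy; omega
        · obtain ⟨rfl, rfl⟩ := hxy; rfl
    calc S.ncard ≤ T.ncard := Set.ncard_le_ncard_of_injOn f hmaps hinj (Set.toFinite _)
      _ = 2 * t - r := hTcard

/-- `α(G_{t,r}) = 2t − r`. -/
theorem stmt7 (t r : ℕ) (ht : 2 ≤ t) (hr1 : 1 ≤ r) (hr2 : r ≤ t - 1) :
    indepNum (Gtr t r) = 2 * t - r := by
  have hrt : r ≤ t := by omega
  set S₀ : Set (Bool × Option (Fin t)) :=
    ((fun i : Fin t => ((false, some i) : Bool × Option (Fin t))) '' Set.univ) ∪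
      ((fun i : Fin t => ((true, some i) : Bool × Option (Fin t))) '' {i | r ≤ i.val}) with hS₀
  have hcard : S₀.ncard = 2 * t - r := by
    apply card_pairs t r hrt
    · intro i j h; simpa using h
    · intro i j h; simpa using h
    · intro i j h; simp at h
  have hindep : IsIndepSet' (Gtr t r) S₀ := by
    rintro x hx y hy hadj
    rw [gtr_adj] at hadj
    obtain ⟨hne, hcl⟩ := hadj
    have hx' : ∃ i : Fin t, x.2 = some i ∧ (x.1 = false ∨ r ≤ i.val) := by
      rcases hx with ⟨i, -, rfl⟩ | ⟨i, hi, rfl⟩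
      · exact ⟨i, rfl, Or.inl rfl⟩
      · exact ⟨i, rfl, Or.inr hi⟩
    have hy' : ∃ i : Fin t, y.2 = some i ∧ (y.1 = false ∨ r ≤ i.val) := by
      rcases hy with ⟨i, -, rfl⟩ | ⟨i, hi, rfl⟩
      · exact ⟨i, rfl, Or.inl rfl⟩
      · exact ⟨i, rfl, Or.inr hi⟩
    obtain ⟨i, hxi, hxc⟩ := hx'
    obtain ⟨j, hyj, hyc⟩ := hy'
    rcases hcl with (⟨-, h, -⟩ | ⟨h, -⟩ | ⟨hne1, k, hk1, hk2, hk3⟩) |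
        (⟨-, h, -⟩ | ⟨h, -⟩ | ⟨hne1, k, hk2, hk1, hk3⟩)
    · rw [hxi] at h; exact Option.some_ne_none i h
    · rw [hxi] at h; exact Option.some_ne_none i h
    · rw [hxi] at hk1; rw [hyj] at hk2
      obtain rfl : i = k := Option.some_injective _ hk1
      obtain rfl : j = i := Option.some_injective _ hk2
      rcases hxc with hx1 | hx1
      · rcases hyc with hy1 | hy1
        · exact hne1 (hx1.trans hy1.symm)
        · omega
      · omega
    · rw [hyj] at h; exact Option.some_ne_none j h
    · rw [hyj] at h; exact Option.some_ne_none j h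
    · rw [hxi] at hk1; rw [hyj] at hk2
      obtain rfl : i = k := Option.some_injective _ hk1
      obtain rfl : j = i := Option.some_injective _ hk2
      rcases hxc with hx1 | hx1
      · rcases hyc with hy1 | hy1
        · exact hne1 (hy1.trans hx1.symm)
        · omega
      · omega
  have hub : ∀ k ∈ {k | ∃ S, IsIndepSet' (Gtr t r) S ∧ S.ncard = k}, k ≤ 2 * t - r := by
    rintro k ⟨S, hS, rfl⟩
    exact indep_card_le t r ht hr1 hr2 S hS
  have hmem : 2 * t - r ∈ {k | ∃ S, IsIndepSet' (Gtr t r) S ∧ S.ncard = k} := ⟨S₀, hindep, hcard⟩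
  exact le_antisymm (csSup_le ⟨_, hmem⟩ hub) (le_csSup ⟨2 * t - r, hub⟩ hmem)
end

section
/- For all integers t ≥ 2 and 1 ≤ r ≤ t − 1, the graph G_{t,r} satisfies γ(G_{t,r}) = 2 and i(G_{t,r}) = t + 1, i.e., its domination number equals 2 and its independent domination number equals t + 1. -/
/-! Basic domination-type definitions for finite simple graphs. -/

variable {V : Type*}

namespace GtrAux
variable {t r : ℕ}

lemma adj_un_some (b : Bool) (i : Fin t) : (Gtr t r).Adj (b, none) (b, some i) := by
  simp [Gtr, SimpleGraph.fromRel_adj]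

lemma adj_hubs (b : Bool) : (Gtr t r).Adj (b, none) (!b, none) := by
  simp [Gtr, SimpleGraph.fromRel_adj]

lemma not_adj_mixed (b c : Bool) (hbc : b ≠ c) (i : Fin t) :
    ¬ (Gtr t r).Adj (b, none) (c, some i) := by
  simp [Gtr, SimpleGraph.fromRel_adj, hbc]

lemma not_adj_same_star (b : Bool) (i j : Fin t) :
    ¬ (Gtr t r).Adj (b, some i) (b, some j) := by
  simp [Gtr, SimpleGraph.fromRel_adj]

lemma nbr_of_leaf (w : Bool × Option (Fin t)) (b : Bool) (i : Fin t)
    (h : (Gtr t r).Adj w (b, some i)) :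
    w = (b, none) ∨ (w = (!b, some i) ∧ i.val < r) := by
  obtain ⟨c, o⟩ := w
  rw [Gtr, SimpleGraph.fromRel_adj] at h
  obtain ⟨hne, h | h⟩ := h
  · rcases h with ⟨h1, h2, _⟩ | ⟨_, h2⟩ | ⟨h1, j, h2, h3, h4⟩
    · simp only at h1 h2; subst h1; subst h2; left; rfl
    · simp at h2
    · simp only at h1 h2 h3
      rw [Option.some_inj] at h3; subst h3; subst h2
      right; refine ⟨?_, h4⟩
      have : c = !b := by cases b <;> cases c <;> simp_all
      rw [this]
  · rcases h with ⟨h1, h2, h3⟩ | ⟨h2, _⟩ | ⟨h1, j, h2, h3, h4⟩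
    · simp at h2
    · simp at h2
    · simp only at h1 h2 h3
      rw [Option.some_inj] at h2; subst h2; subst h3
      right; refine ⟨?_, h4⟩
      have : c = !b := by cases b <;> cases c <;> simp_all
      rw [this]

lemma card_le_inj (S : Set (Bool × Option (Fin t))) (f : Option (Fin t) → Bool × Option (Fin t))
    (hf : Function.Injective f) (hmem : ∀ a, f a ∈ S) : t + 1 ≤ S.ncard := by
  have h1 : Set.range f ⊆ S := by rintro _ ⟨a, rfl⟩; exact hmem a
  have h2 : (Set.range f).ncard = t + 1 := by
    rw [← Set.image_univ, Set.ncard_image_of_injective _ hf, Set.ncard_univ]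
    simp [Nat.card_eq_fintype_card]
  calc t + 1 = (Set.range f).ncard := h2.symm
    _ ≤ S.ncard := Set.ncard_le_ncard h1 S.toFinite

lemma dom_two (D : Set (Bool × Option (Fin t))) (ht : 2 ≤ t) (hD : IsDomSet (Gtr t r) D) :
    2 ≤ D.ncard := by
  have hne : D.Nonempty := by
    by_contra h
    rw [Set.not_nonempty_iff_eq_empty] at h
    obtain ⟨u, hu, -⟩ := hD ((false : Bool), (none : Option (Fin t))) (by simp [h])
    simp [h] at hu
  by_contra hcon
  push_neg at hcon
  have hone : ∀ x ∈ D, ∀ y ∈ D, x = y :=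
    (Set.ncard_le_one D.toFinite).mp (by omega)
  obtain ⟨w, hw⟩ := hne
  obtain ⟨c, o⟩ := w
  cases o with
  | none =>
    have hz : ((!c : Bool), (some ⟨0, by omega⟩ : Option (Fin t))) ∉ D := by
      intro h
      have := hone _ h _ hw
      simp [Prod.ext_iff] at this
    obtain ⟨u, hu, hadj⟩ := hD _ hz
    have := hone _ hu _ hw
    subst this
    exact not_adj_mixed c (!c) (by cases c <;> simp) _ hadj
  | some i =>
    have hz : ((!c : Bool), (none : Option (Fin t))) ∉ D := by
      intro h
      have := hone _ h _ hw
      simp [Prod.ext_iff] at this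
    obtain ⟨u, hu, hadj⟩ := hD _ hz
    have := hone _ hu _ hw
    subst this
    exact not_adj_mixed (!c) c (by cases c <;> simp) i hadj.symm

lemma indep_dom_lb (S : Set (Bool × Option (Fin t))) (ht : 2 ≤ t) (hr2 : r ≤ t - 1)
    (hind : IsIndepSet' (Gtr t r) S) (hdom : IsDomSet (Gtr t r) S) :
    t + 1 ≤ S.ncard := by
  classical
  have L1 : ∀ (b : Bool) (i : Fin t), (b, some i) ∉ S →
      ((b, (none : Option (Fin t))) ∈ S ∨ ((!b, some i) ∈ S ∧ i.val < r)) := by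
    intro b i h
    obtain ⟨w, hw, hadj⟩ := hdom _ h
    rcases nbr_of_leaf w b i hadj with rfl | ⟨rfl, hlt⟩
    · exact Or.inl hw
    · exact Or.inr ⟨hw, hlt⟩
  by_cases hA : ∃ b : Bool, (b, (none : Option (Fin t))) ∈ S
  · obtain ⟨b0, hb0⟩ := hA
    have hv : ∀ i : Fin t, (!b0, some i) ∈ S := by
      intro i
      by_contra h
      rcases L1 (!b0) i h with hu' | ⟨hv', -⟩
      · exact hind _ hb0 _ hu' (adj_hubs b0)
      · rw [Bool.not_not] at hv'
        exact hind _ hb0 _ hv' (adj_un_some b0 i)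
    refine card_le_inj S (fun o => Option.elim o (b0, none) (fun i => (!b0, some i))) ?_ ?_
    · intro a b h
      cases a <;> cases b <;> simp_all [Prod.ext_iff]
    · intro a
      cases a with
      | none => exact hb0
      | some i => exact hv i
  · push_neg at hA
    have hpair : ∀ (b : Bool) (i : Fin t), (b, some i) ∈ S ∨ (!b, some i) ∈ S := by
      intro b i
      by_cases h : (b, some i) ∈ S
      · exact Or.inl h
      · rcases L1 b i h with hu | ⟨hv, -⟩
        · exact absurd hu (hA b)
        · exact Or.inr hv
    have hboth : ∀ i : Fin t, ¬ i.val < r → ∀ b : Bool, (b, some i) ∈ S := by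
      intro i hi b
      by_contra h
      rcases L1 b i h with hu | ⟨-, hlt⟩
      · exact hA b hu
      · exact hi hlt
    set i0 : Fin t := ⟨t - 1, by omega⟩ with hi0def
    have hi0 : ¬ i0.val < r := by simp [hi0def]; omega
    refine card_le_inj S (fun o => Option.elim o ((true : Bool), some i0)
      (fun i => (if (false, some i) ∈ S then (false : Bool) else true, some i))) ?_ ?_
    · intro a b h
      cases a with
      | none =>
        cases b with
        | none => rfl
        | some j =>
          simp only [Option.elim, Prod.ext_iff, Option.some_inj] at h
          obtain ⟨h1, h2⟩ := h
          subst h2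
          rw [if_pos (hboth i0 hi0 false)] at h1
          simp at h1
      | some i =>
        cases b with
        | none =>
          simp only [Option.elim, Prod.ext_iff, Option.some_inj] at h
          obtain ⟨h1, h2⟩ := h
          subst h2
          rw [if_pos (hboth i0 hi0 false)] at h1
          simp at h1
        | some j =>
          simp only [Option.elim, Prod.ext_iff, Option.some_inj] at h
          rw [h.2]
    · intro a
      cases a with
      | none => exact hboth i0 hi0 true
      | some i =>
        by_cases h : ((false : Bool), some i) ∈ S
        · simpa [h] using h
        · rcases hpair false i with h' | h'
          · exact absurd h' h
          · simpa [h] using h'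

end GtrAux

open GtrAux

/-- `γ(G_{t,r}) = 2` and `i(G_{t,r}) = t + 1`. -/
theorem stmt8 (t r : ℕ) (ht : 2 ≤ t) (hr1 : 1 ≤ r) (hr2 : r ≤ t - 1) :
    domNum (Gtr t r) = 2 ∧ indepDomNum (Gtr t r) = t + 1 := by
  constructor
  · -- domination number = 2
    have hmem : 2 ∈ {k | ∃ D : Set (Bool × Option (Fin t)), IsDomSet (Gtr t r) D ∧ D.ncard = k} := by
      refine ⟨{((false : Bool), (none : Option (Fin t))), (true, none)}, ?_, ?_⟩
      · intro v hv
        obtain ⟨b, o⟩ := v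
        cases o with
        | none => cases b <;> simp at hv
        | some i =>
          exact ⟨(b, none), by cases b <;> simp, adj_un_some b i⟩
      · exact Set.ncard_pair (by simp)
    refine le_antisymm (Nat.sInf_le hmem) (le_csInf ⟨2, hmem⟩ ?_)
    rintro k ⟨D, hD, rfl⟩
    exact dom_two D ht hD
  · -- independent domination number = t + 1
    have hmem : t + 1 ∈ {k | ∃ S : Set (Bool × Option (Fin t)),
        IsIndepSet' (Gtr t r) S ∧ IsDomSet (Gtr t r) S ∧ S.ncard = k} := by
      refine ⟨insert ((false : Bool), (none : Option (Fin t)))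
        ((fun i : Fin t => ((true : Bool), (some i : Option (Fin t)))) '' Set.univ), ?_, ?_, ?_⟩
      · intro x hx y hy hadj
        simp only [Set.mem_insert_iff, Set.mem_image, Set.mem_univ, true_and] at hx hy
        rcases hx with rfl | ⟨i, rfl⟩ <;> rcases hy with rfl | ⟨j, rfl⟩
        · exact (Gtr t r).irrefl hadj
        · exact not_adj_mixed false true (by simp) j hadj
        · exact not_adj_mixed false true (by simp) i hadj.symm
        · exact not_adj_same_star true i j hadj
      · intro v hv
        simp only [Set.mem_insert_iff, Set.mem_image, Set.mem_univ, true_and] at hv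
        push_neg at hv
        obtain ⟨h1, h2⟩ := hv
        obtain ⟨b, o⟩ := v
        cases b with
        | false =>
          cases o with
          | none => exact absurd rfl h1
          | some i =>
            exact ⟨(false, none), Or.inl rfl, adj_un_some false i⟩
        | true =>
          cases o with
          | none =>
            refine ⟨(true, some ⟨0, by omega⟩), Or.inr ⟨⟨0, by omega⟩, trivial, rfl⟩,
              (adj_un_some true ⟨0, by omega⟩).symm⟩
          | some i => exact absurd rfl (h2 i)
      · have hnm : ((false : Bool), (none : Option (Fin t))) ∉
            ((fun i : Fin t => ((true : Bool), (some i : Option (Fin t)))) '' Set.univ) := by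
          simp
        rw [Set.ncard_insert_of_notMem hnm (Set.toFinite _),
          Set.ncard_image_of_injective _ (fun a b h => by simpa using h), Set.ncard_univ]
        simp [Nat.card_eq_fintype_card]
    refine le_antisymm (Nat.sInf_le hmem) (le_csInf ⟨t + 1, hmem⟩ ?_)
    rintro k ⟨S, hind, hdom, rfl⟩
    exact indep_dom_lb S ht hr2 hind hdom
end

section
/- For all integers t ≥ 2 and 1 ≤ r ≤ t − 1, the graph G_{t,r} satisfies β(G_{t,r}) = r + 2, has exactly 2(t − r) leaves, and has exactly 2 support vertices, where β denotes the vertex cover number. -/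
/-! Basic domination-type definitions for finite simple graphs. -/

variable {V : Type*}

section Aux
variable {t r : ℕ}

lemma adj_ss (b b' : Bool) (i j : Fin t) :
    (Gtr t r).Adj (b, some i) (b', some j) ↔ b ≠ b' ∧ i = j ∧ i.val < r := by
  simp [Gtr, SimpleGraph.fromRel_adj, Prod.ext_iff]
  constructor
  · rintro ⟨h1, (⟨hb, rfl, h3⟩ | ⟨hb, rfl, h3⟩)⟩ <;> exact ⟨by tauto, rfl, by omega⟩
  · rintro ⟨h1, rfl, h3⟩; exact ⟨by tauto, Or.inl ⟨by tauto, rfl, h3⟩⟩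

lemma adj_nn (b b' : Bool) : (Gtr t r).Adj (b, none) (b', none) ↔ b ≠ b' := by
  simp [Gtr, SimpleGraph.fromRel_adj, Prod.ext_iff]

lemma adj_ns (b b' : Bool) (i : Fin t) : (Gtr t r).Adj (b, none) (b', some i) ↔ b = b' := by
  simp [Gtr, SimpleGraph.fromRel_adj, Prod.ext_iff]

lemma adj_sn (b b' : Bool) (i : Fin t) : (Gtr t r).Adj (b, some i) (b', none) ↔ b = b' := by
  rw [SimpleGraph.adj_comm, adj_ns]; exact eq_comm

lemma nbhd_some_lt (b : Bool) (i : Fin t) (h : i.val < r) :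
    (Gtr t r).neighborSet (b, some i) = {(b, none), (!b, some i)} := by
  ext ⟨b', (_ | j)⟩
  · simp [SimpleGraph.neighborSet, adj_sn, eq_comm]
  · simp only [SimpleGraph.neighborSet, Set.mem_setOf_eq, adj_ss, Set.mem_insert_iff,
      Set.mem_singleton_iff, Prod.mk.injEq]
    constructor
    · rintro ⟨hb, rfl, _⟩; right; exact ⟨by cases b <;> cases b' <;> simp_all, rfl⟩
    · rintro (⟨_, h'⟩ | ⟨rfl, h'⟩)
      · exact absurd h' (by simp)
      · cases Option.some.inj h'
        exact ⟨by cases b <;> simp, rfl, h⟩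

lemma nbhd_some_ge (b : Bool) (i : Fin t) (h : ¬ i.val < r) :
    (Gtr t r).neighborSet (b, some i) = {(b, none)} := by
  ext ⟨b', (_ | j)⟩
  · simp [SimpleGraph.neighborSet, adj_sn, eq_comm]
  · simp only [SimpleGraph.neighborSet, Set.mem_setOf_eq, adj_ss, Set.mem_singleton_iff,
      Prod.mk.injEq]
    constructor
    · rintro ⟨_, rfl, h'⟩; exact absurd h' h
    · rintro ⟨_, h'⟩; exact absurd h' (by simp)


lemma not_leaf_none (ht : 2 ≤ t) (b : Bool) : ((b, none) : Bool × Option (Fin t)) ∉ leafSet (Gtr t r) := by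
  intro h
  have hsub : ({((!b : Bool), (none : Option (Fin t))), (b, some ⟨0, by omega⟩)} : Set _)
      ⊆ (Gtr t r).neighborSet (b, none) := by
    rintro p (rfl | rfl)
    · exact (adj_nn b (!b)).2 (by cases b <;> simp)
    · exact (adj_ns b b _).2 rfl
  have h2 : (2 : ℕ) ≤ ((Gtr t r).neighborSet (b, none)).ncard := by
    rw [← Set.ncard_pair (show ((!b : Bool), (none : Option (Fin t))) ≠ (b, some ⟨0, by omega⟩) by simp)]
    exact Set.ncard_le_ncard hsub (Set.toFinite _)
  rw [leafSet, Set.mem_setOf_eq] at h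
  omega

lemma leaf_iff (ht : 2 ≤ t) (p : Bool × Option (Fin t)) :
    p ∈ leafSet (Gtr t r) ↔ ∃ i : Fin t, p.2 = some i ∧ r ≤ i.val := by
  obtain ⟨b, (_ | i)⟩ := p
  · simp only [Option.some.injEq]
    constructor
    · intro h; exact absurd h (not_leaf_none ht b)
    · rintro ⟨i, h, -⟩; exact absurd h (by simp)
  · constructor
    · intro h
      refine ⟨i, rfl, ?_⟩
      by_contra hlt
      rw [leafSet, Set.mem_setOf_eq, nbhd_some_lt b i (by omega)] at h
      rw [Set.ncard_pair (by simp)] at h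
      omega
    · rintro ⟨j, hj, hge⟩
      cases Option.some.inj hj
      rw [leafSet, Set.mem_setOf_eq, nbhd_some_ge b i (by omega)]
      exact Set.ncard_singleton _

lemma support_eq (ht : 2 ≤ t) (hr1 : 1 ≤ r) (hr2 : r ≤ t - 1) :
    supportSet (Gtr t r) = {((false : Bool), (none : Option (Fin t))), (true, none)} := by
  have hrt : r < t := by omega
  ext ⟨b, (_ | i)⟩
  · simp only [Set.mem_insert_iff, Set.mem_singleton_iff, Prod.mk.injEq]
    constructor
    · intro _; cases b <;> simp
    · intro _
      exact ⟨(b, some ⟨r, hrt⟩), (adj_ns b b _).2 rfl,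
        (leaf_iff ht _).2 ⟨⟨r, hrt⟩, rfl, le_refl r⟩⟩
  · simp only [Set.mem_insert_iff, Set.mem_singleton_iff, Prod.mk.injEq]
    constructor
    · rintro ⟨q, hadj, hleaf⟩
      exfalso
      obtain ⟨j, hj, hge⟩ := (leaf_iff ht q).1 hleaf
      obtain ⟨b', (_ | k)⟩ := q
      · exact absurd hj (by simp)
      · cases Option.some.inj hj
        obtain ⟨-, rfl, hlt⟩ := (adj_ss b b' i j).1 hadj
        omega
    · rintro (⟨-, h⟩ | ⟨-, h⟩) <;> exact absurd h (by simp)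


lemma leaf_card (ht : 2 ≤ t) (hr2 : r ≤ t - 1) :
    (leafSet (Gtr t r)).ncard = 2 * (t - r) := by
  have hrt : r < t := by omega
  set F : Bool × Fin (t - r) → Bool × Option (Fin t) :=
    fun q => (q.1, some ⟨r + q.2.val, by omega⟩) with hF
  have hinj : Function.Injective F := by
    rintro ⟨b, j⟩ ⟨b', j'⟩ h
    have h1 : b = b' := congrArg Prod.fst h
    have h2 : r + j.val = r + j'.val := by
      have h3 := congrArg Prod.snd h
      simp only [hF] at h3
      exact congrArg Fin.val (Option.some.inj h3)
    cases h1
    refine Prod.ext rfl (Fin.ext ?_)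
    show (j : ℕ) = (j' : ℕ)
    omega
  have hrange : leafSet (Gtr t r) = Set.range F := by
    ext p
    rw [leaf_iff ht]
    constructor
    · rintro ⟨i, hp, hge⟩
      obtain ⟨b, o⟩ := p
      cases hp
      exact ⟨(b, ⟨i.val - r, by omega⟩), by simp [hF]; exact Fin.ext (by simp; omega)⟩
    · rintro ⟨⟨b, j⟩, rfl⟩
      exact ⟨_, rfl, by simp [hF]⟩
  rw [hrange, ← Set.image_univ, Set.ncard_image_of_injective _ hinj, Set.ncard_univ,
    Nat.card_prod]
  simp [mul_comm]

lemma vc_upper (ht : 2 ≤ t) (hr2 : r ≤ t - 1) :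
    ∃ C : Set (Bool × Option (Fin t)), IsVertexCover (Gtr t r) C ∧ C.ncard = r + 2 := by
  have hrt : r < t := by omega
  set G0 : Bool ⊕ Fin r → Bool × Option (Fin t) :=
    fun q => Sum.elim (fun b => (b, none)) (fun j => (false, some ⟨j.val, by omega⟩)) q with hG0
  have hinj : Function.Injective G0 := by
    rintro (b | j) (b' | j') h <;>
      simp only [hG0, Sum.elim_inl, Sum.elim_inr, Prod.mk.injEq, Option.some.injEq,
        Fin.mk.injEq] at h
    · exact congrArg Sum.inl h.1
    · exact absurd h.2 (by simp)
    · exact absurd h.2 (by simp)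
    · exact congrArg Sum.inr (Fin.ext h.2)
  refine ⟨Set.range G0, ?_, ?_⟩
  · rintro ⟨b, (_ | i)⟩ ⟨b', (_ | j)⟩ hadj
    · exact Or.inl ⟨Sum.inl b, rfl⟩
    · exact Or.inl ⟨Sum.inl b, rfl⟩
    · exact Or.inr ⟨Sum.inl b', rfl⟩
    · obtain ⟨hb, rfl, hlt⟩ := (adj_ss b b' i j).1 hadj
      cases b
      · exact Or.inl ⟨Sum.inr ⟨i.val, hlt⟩, by simp [hG0]⟩
      · cases b'
        · exact Or.inr ⟨Sum.inr ⟨i.val, hlt⟩, by simp [hG0]⟩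
        · exact absurd rfl hb
  · rw [← Set.image_univ, Set.ncard_image_of_injective _ hinj, Set.ncard_univ, Nat.card_sum]
    simp [add_comm]

lemma vc_lower (ht : 2 ≤ t) (hr2 : r ≤ t - 1) (C : Set (Bool × Option (Fin t)))
    (hC : IsVertexCover (Gtr t r) C) : r + 2 ≤ C.ncard := by
  classical
  have hrt : r < t := by omega
  have ht1 : t - 1 < t := by omega
  set f : Bool ⊕ Fin r → Bool × Option (Fin t) := fun q =>
    Sum.elim
      (fun b => if (b, (none : Option (Fin t))) ∈ C then (b, none) else (b, some ⟨t-1, ht1⟩))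
      (fun j => if ((false : Bool), some (⟨j.val, by omega⟩ : Fin t)) ∈ C
        then ((false : Bool), some (⟨j.val, by omega⟩ : Fin t))
        else ((true : Bool), some (⟨j.val, by omega⟩ : Fin t))) q with hf
  have hmem : ∀ q, f q ∈ C := by
    rintro (b | j)
    · simp only [hf, Sum.elim_inl]
      split_ifs with h
      · exact h
      · rcases hC (b, none) (b, some ⟨t-1, ht1⟩) ((adj_ns b b _).2 rfl) with h' | h'
        · exact absurd h' h
        · exact h'
    · simp only [hf, Sum.elim_inr]
      split_ifs with h
      · exact h
      · have hadj : (Gtr t r).Adj (false, some ⟨j.val, by omega⟩) (true, some ⟨j.val, by omega⟩) :=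
          (adj_ss _ _ _ _).2 ⟨by simp, rfl, j.isLt⟩
        rcases hC _ _ hadj with h' | h'
        · exact absurd h' h
        · exact h'
  have hinj : Set.InjOn f Set.univ := by
    have hsnd_inl : ∀ b, f (Sum.inl b) = (b, none) ∨ f (Sum.inl b) = (b, some ⟨t-1, ht1⟩) := by
      intro b; simp only [hf, Sum.elim_inl]; split_ifs
      · exact Or.inl rfl
      · exact Or.inr rfl
    have hfst_inr : ∀ j : Fin r, ∃ b, f (Sum.inr j) = (b, some ⟨j.val, by omega⟩) := by
      intro j; simp only [hf, Sum.elim_inr]; split_ifs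
      · exact ⟨false, rfl⟩
      · exact ⟨true, rfl⟩
    rintro (b | j) - (b' | j') - h
    · rcases hsnd_inl b with h1 | h1 <;> rcases hsnd_inl b' with h2 | h2 <;> rw [h1, h2] at h <;>
        · have hb : b = b' := congrArg Prod.fst h
          cases hb; rfl
    · exfalso
      obtain ⟨c, hc⟩ := hfst_inr j'
      rcases hsnd_inl b with h1 | h1 <;> rw [h1, hc] at h
      · exact absurd (congrArg Prod.snd h) (by simp)
      · have h3 : (⟨t-1, ht1⟩ : Fin t) = ⟨j'.val, by omega⟩ :=
          Option.some.inj (congrArg Prod.snd h)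
        have h4 : t - 1 = (j' : ℕ) := congrArg Fin.val h3
        have hj := j'.isLt
        omega
    · exfalso
      obtain ⟨c, hc⟩ := hfst_inr j
      rcases hsnd_inl b' with h1 | h1 <;> rw [h1, hc] at h
      · exact absurd (congrArg Prod.snd h) (by simp)
      · have h3 : (⟨j.val, by omega⟩ : Fin t) = ⟨t-1, ht1⟩ :=
          Option.some.inj (congrArg Prod.snd h)
        have h4 : (j : ℕ) = t - 1 := congrArg Fin.val h3
        have hj := j.isLt
        omega
    · obtain ⟨c, hc⟩ := hfst_inr j
      obtain ⟨c', hc'⟩ := hfst_inr j'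
      rw [hc, hc'] at h
      have h3 : (⟨j.val, by omega⟩ : Fin t) = ⟨j'.val, by omega⟩ :=
        Option.some.inj (congrArg Prod.snd h)
      have h4 := congrArg Fin.val h3
      exact congrArg Sum.inr (Fin.ext h4)
  have hle := Set.ncard_le_ncard_of_injOn f (fun a _ => hmem a) hinj (Set.toFinite C)
  rw [Set.ncard_univ, Nat.card_sum] at hle
  simpa [add_comm] using hle

end Aux

/-- `β(G_{t,r}) = r + 2`, `|L(G_{t,r})| = 2(t − r)` and `|S(G_{t,r})| = 2`. -/
theorem stmt9 (t r : ℕ) (ht : 2 ≤ t) (hr1 : 1 ≤ r) (hr2 : r ≤ t - 1) :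
    vcNum (Gtr t r) = r + 2 ∧
    (leafSet (Gtr t r)).ncard = 2 * (t - r) ∧
    (supportSet (Gtr t r)).ncard = 2 := by
  refine ⟨?_, leaf_card ht hr2, ?_⟩
  · obtain ⟨C0, hcov, hcard⟩ := vc_upper ht hr2
    apply le_antisymm
    · exact Nat.sInf_le ⟨C0, hcov, hcard⟩
    · refine le_csInf ⟨r + 2, C0, hcov, hcard⟩ ?_
      rintro k ⟨C, hC, rfl⟩
      exact vc_lower ht hr2 C hC
  · rw [support_eq ht hr1 hr2]
    exact Set.ncard_pair (by simp)
end

section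
/- For every integer r ≥ 2, the graph G_r of the family H′ satisfies γ×2(G_r) = 5, i.e., the minimum cardinality of a double dominating set of G_r equals 5. -/
/-! Basic domination-type definitions for finite simple graphs. -/

variable {V : Type*}

/-- The graph `G_r` of the family `H'`: vertices `a₁,a₂,a₃` (as `Sum.inl i`, 0-indexed) and
`v₁,…,v_{3r}` (as `Sum.inr j`, 0-indexed); `v_j` is adjacent exactly to `a_i` and `a_{i+1}`
(cyclically) whenever `j ≡ i (mod 3)`. -/
def GrH (r : ℕ) : SimpleGraph (Fin 3 ⊕ Fin (3 * r)) :=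
  SimpleGraph.fromRel (fun x y =>
    ∃ (i : Fin 3) (j : Fin (3 * r)), x = Sum.inl i ∧ y = Sum.inr j ∧
      (i.val = j.val % 3 ∨ i.val = (j.val + 1) % 3))

section MyAux

/-- Helper: the element of `Fin 3` with value `m % 3`. -/
def A3 (m : ℕ) : Fin 3 := ⟨m % 3, by omega⟩

lemma mem_closedNbhd {G : SimpleGraph V} {v x : V} :
    x ∈ closedNbhd G v ↔ x = v ∨ G.Adj v x := by
  simp [closedNbhd]

lemma grh_adj_inr {r : ℕ} (j : Fin (3 * r)) (x : Fin 3 ⊕ Fin (3 * r)) :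
    (GrH r).Adj (Sum.inr j) x ↔
      x = Sum.inl (A3 j.val) ∨ x = Sum.inl (A3 (j.val + 1)) := by
  rw [GrH, SimpleGraph.fromRel_adj]
  constructor
  · rintro ⟨hne, ⟨i, j', hx, hy, h⟩ | ⟨i, j', hx, hy, h⟩⟩
    · simp at hx
    · obtain rfl := Sum.inr.inj hy
      subst hx
      rcases h with h | h
      · left; congr 1; exact Fin.ext (by simpa [A3] using h)
      · right; congr 1; exact Fin.ext (by simpa [A3] using h)
  · rintro (rfl | rfl)
    · exact ⟨by simp, Or.inr ⟨A3 j.val, j, rfl, rfl, Or.inl (by simp [A3])⟩⟩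
    · exact ⟨by simp, Or.inr ⟨A3 (j.val + 1), j, rfl, rfl, Or.inr (by simp [A3])⟩⟩

lemma grh_adj_inl {r : ℕ} (i : Fin 3) (x : Fin 3 ⊕ Fin (3 * r)) :
    (GrH r).Adj (Sum.inl i) x ↔
      ∃ j : Fin (3 * r), x = Sum.inr j ∧ (i.val = j.val % 3 ∨ i.val = (j.val + 1) % 3) := by
  rw [GrH, SimpleGraph.fromRel_adj]
  constructor
  · rintro ⟨hne, ⟨i', j', hx, hy, h⟩ | ⟨i', j', hx, hy, h⟩⟩
    · obtain rfl := Sum.inl.inj hx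
      exact ⟨j', hy, h⟩
    · simp at hy
  · rintro ⟨j, rfl, h⟩
    exact ⟨by simp, Or.inl ⟨i, j, rfl, rfl, h⟩⟩

lemma two_le_ncard_of_pair {α : Type*} [Finite α] {S : Set α} {x y : α}
    (hxy : x ≠ y) (hx : x ∈ S) (hy : y ∈ S) : 2 ≤ S.ncard := by
  have h := Set.ncard_le_ncard (Set.insert_subset hx (Set.singleton_subset_iff.2 hy)) S.toFinite
  rwa [Set.ncard_pair hxy] at h

lemma mem_pair_of_two_le {α : Type*} {S : Set α} {x y : α}
    (h : 2 ≤ S.ncard) (hs : S ⊆ {x, y}) : x ∈ S ∧ y ∈ S := by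
  by_contra hcon
  push_neg at hcon
  rcases Classical.em (x ∈ S) with hx | hx
  · have hy := hcon hx
    have hsx : S ⊆ {x} := by
      intro z hz
      have := hs hz
      simp only [Set.mem_insert_iff, Set.mem_singleton_iff] at this ⊢
      rcases this with rfl | rfl
      · rfl
      · exact absurd hz hy
    have := Set.ncard_le_ncard hsx (Set.finite_singleton x)
    simp [Set.ncard_singleton] at this
    omega
  · have hsy : S ⊆ {y} := by
      intro z hz
      have := hs hz
      simp only [Set.mem_insert_iff, Set.mem_singleton_iff] at this ⊢
      rcases this with rfl | rfl
      · exact absurd hz hx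
      · rfl
    have := Set.ncard_le_ncard hsy (Set.finite_singleton y)
    simp [Set.ncard_singleton] at this
    omega

lemma five_le_ncard {α : Type*} [Finite α] {D : Set α} {a b c d e : α}
    (ha : a ∈ D) (hb : b ∈ D) (hc : c ∈ D) (hd : d ∈ D) (he : e ∈ D)
    (hab : a ≠ b) (hac : a ≠ c) (had : a ≠ d) (hae : a ≠ e)
    (hbc : b ≠ c) (hbd : b ≠ d) (hbe : b ≠ e)
    (hcd : c ≠ d) (hce : c ≠ e) (hde : d ≠ e) : 5 ≤ D.ncard := by
  have hsub : ({a, b, c, d, e} : Set α) ⊆ D := by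
    intro x hx
    simp only [Set.mem_insert_iff, Set.mem_singleton_iff] at hx
    rcases hx with rfl | rfl | rfl | rfl | rfl <;> assumption
  have hcard : ({a, b, c, d, e} : Set α).ncard = 5 := by
    rw [Set.ncard_insert_of_notMem (by simp [hab, hac, had, hae]),
        Set.ncard_insert_of_notMem (by simp [hbc, hbd, hbe]),
        Set.ncard_insert_of_notMem (by simp [hcd, hce]),
        Set.ncard_pair hde]
  have := Set.ncard_le_ncard hsub D.toFinite
  omega

lemma vj_lemma {r : ℕ} {D : Set (Fin 3 ⊕ Fin (3 * r))} (hD : IsDoubleDomSet (GrH r) D)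
    (j : Fin (3 * r)) (hm : Sum.inl (A3 j.val) ∉ D) :
    Sum.inr j ∈ D ∧ Sum.inl (A3 (j.val + 1)) ∈ D := by
  have h2 := hD (Sum.inr j)
  have hsub : closedNbhd (GrH r) (Sum.inr j) ∩ D ⊆
      {Sum.inr j, Sum.inl (A3 (j.val + 1))} := by
    rintro x ⟨hx1, hx2⟩
    rw [mem_closedNbhd] at hx1
    rcases hx1 with rfl | hadj
    · exact Set.mem_insert _ _
    · rw [grh_adj_inr] at hadj
      rcases hadj with rfl | rfl
      · exact absurd hx2 hm
      · simp
  have h := mem_pair_of_two_le h2 hsub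
  exact ⟨h.1.2, h.2.2⟩

lemma vj_lemma' {r : ℕ} {D : Set (Fin 3 ⊕ Fin (3 * r))} (hD : IsDoubleDomSet (GrH r) D)
    (j : Fin (3 * r)) (hm : Sum.inl (A3 (j.val + 1)) ∉ D) :
    Sum.inr j ∈ D ∧ Sum.inl (A3 j.val) ∈ D := by
  have h2 := hD (Sum.inr j)
  have hsub : closedNbhd (GrH r) (Sum.inr j) ∩ D ⊆
      {Sum.inr j, Sum.inl (A3 j.val)} := by
    rintro x ⟨hx1, hx2⟩
    rw [mem_closedNbhd] at hx1
    rcases hx1 with rfl | hadj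
    · exact Set.mem_insert _ _
    · rw [grh_adj_inr] at hadj
      rcases hadj with rfl | rfl
      · simp
      · exact absurd hx2 hm
  have h := mem_pair_of_two_le h2 hsub
  exact ⟨h.1.2, h.2.2⟩

lemma ai_neighbor {r : ℕ} {D : Set (Fin 3 ⊕ Fin (3 * r))} (hD : IsDoubleDomSet (GrH r) D)
    (i : Fin 3) :
    ∃ j : Fin (3 * r), Sum.inr j ∈ D ∧ (i.val = j.val % 3 ∨ i.val = (j.val + 1) % 3) := by
  have h2 := hD (Sum.inl i)
  have h1 : 1 < (closedNbhd (GrH r) (Sum.inl i) ∩ D).ncard := h2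
  obtain ⟨w, hw, hwne⟩ := Set.exists_ne_of_one_lt_ncard h1 (Sum.inl i)
  obtain ⟨hw1, hw2⟩ := hw
  rw [mem_closedNbhd] at hw1
  rcases hw1 with rfl | hadj
  · exact absurd rfl hwne
  · rw [grh_adj_inl] at hadj
    obtain ⟨j, rfl, h⟩ := hadj
    exact ⟨j, hw2, h⟩

lemma caseB {r : ℕ} (hr : 2 ≤ r) {D : Set (Fin 3 ⊕ Fin (3 * r))}
    (hD : IsDoubleDomSet (GrH r) D) (m : ℕ) (hm3 : m < 3)
    (hm : Sum.inl (A3 m) ∉ D) : 5 ≤ D.ncard := by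
  have h6 : 6 ≤ 3 * r := by omega
  have hmm : m % 3 = m := Nat.mod_eq_of_lt hm3
  -- the three v-vertices we use
  have H1 := vj_lemma hD ⟨m, by omega⟩ (by
    have : A3 m = A3 m := rfl
    simpa using hm)
  have H2 := vj_lemma hD ⟨m + 3, by omega⟩ (by
    have e : A3 (m + 3) = A3 m := Fin.ext (by simp only [A3]; omega)
    simpa [e] using hm)
  have H3 := vj_lemma' hD ⟨(m + 2) % 3, by omega⟩ (by
    have e : A3 ((m + 2) % 3 + 1) = A3 m := Fin.ext (by simp only [A3]; omega)
    simpa [e] using hm)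
  exact five_le_ncard H1.2 H3.2 H1.1 H2.1 H3.1
    (by simp only [ne_eq, Sum.inl.injEq, A3, Fin.mk.injEq]; omega)
    (by simp) (by simp) (by simp) (by simp) (by simp) (by simp)
    (by simp only [ne_eq, Sum.inr.injEq, Fin.mk.injEq]; omega)
    (by simp only [ne_eq, Sum.inr.injEq, Fin.mk.injEq]; omega)
    (by simp only [ne_eq, Sum.inr.injEq, Fin.mk.injEq]; omega)

lemma caseA {r : ℕ} (hr : 2 ≤ r) {D : Set (Fin 3 ⊕ Fin (3 * r))}
    (hD : IsDoubleDomSet (GrH r) D)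
    (h0 : Sum.inl (A3 0) ∈ D) (h1 : Sum.inl (A3 1) ∈ D) (h2 : Sum.inl (A3 2) ∈ D) :
    5 ≤ D.ncard := by
  obtain ⟨j0, hj0, hp0⟩ := ai_neighbor hD (A3 0)
  obtain ⟨j1, hj1, hp1⟩ := ai_neighbor hD (A3 1)
  obtain ⟨j2, hj2, hp2⟩ := ai_neighbor hD (A3 2)
  simp only [A3] at hp0 hp1 hp2
  have hne : j0 ≠ j1 ∨ j1 ≠ j2 := by
    by_contra hcon
    push_neg at hcon
    obtain ⟨rfl, rfl⟩ := hcon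
    omega
  have habne01 : (Sum.inl (A3 0) : Fin 3 ⊕ Fin (3 * r)) ≠ Sum.inl (A3 1) := by
    simp only [ne_eq, Sum.inl.injEq, A3, Fin.mk.injEq]; omega
  have habne02 : (Sum.inl (A3 0) : Fin 3 ⊕ Fin (3 * r)) ≠ Sum.inl (A3 2) := by
    simp only [ne_eq, Sum.inl.injEq, A3, Fin.mk.injEq]; omega
  have habne12 : (Sum.inl (A3 1) : Fin 3 ⊕ Fin (3 * r)) ≠ Sum.inl (A3 2) := by
    simp only [ne_eq, Sum.inl.injEq, A3, Fin.mk.injEq]; omega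
  rcases hne with hne | hne
  · exact five_le_ncard h0 h1 h2 hj0 hj1 habne01 habne02 (by simp) (by simp)
      habne12 (by simp) (by simp) (by simp) (by simp) (by simpa using hne)
  · exact five_le_ncard h0 h1 h2 hj1 hj2 habne01 habne02 (by simp) (by simp)
      habne12 (by simp) (by simp) (by simp) (by simp) (by simpa using hne)

end MyAux

/-- `γ×2(G_r) = 5` for every graph `G_r` of the family `H'`. -/
theorem stmt12 (r : ℕ) (hr : 2 ≤ r) :
    ddomNum (GrH r) = 5 := by
  have h6 : 6 ≤ 3 * r := by omega
  set D0 : Set (Fin 3 ⊕ Fin (3 * r)) :=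
    {Sum.inl (A3 0), Sum.inl (A3 1), Sum.inl (A3 2),
     Sum.inr ⟨0, by omega⟩, Sum.inr ⟨2, by omega⟩} with hD0
  have hall : ∀ i : Fin 3, Sum.inl i ∈ D0 := by
    intro i
    fin_cases i <;> simp [hD0, A3]
  have hDD : IsDoubleDomSet (GrH r) D0 := by
    intro v
    rcases v with i | j
    · obtain ⟨w, hwD, hadj⟩ : ∃ w, w ∈ D0 ∧ (GrH r).Adj (Sum.inl i) w := by
        fin_cases i
        · exact ⟨Sum.inr ⟨0, by omega⟩, by simp [hD0],
            (grh_adj_inl _ _).2 ⟨⟨0, by omega⟩, rfl, Or.inl rfl⟩⟩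
        · exact ⟨Sum.inr ⟨0, by omega⟩, by simp [hD0],
            (grh_adj_inl _ _).2 ⟨⟨0, by omega⟩, rfl, Or.inr rfl⟩⟩
        · exact ⟨Sum.inr ⟨2, by omega⟩, by simp [hD0],
            (grh_adj_inl _ _).2 ⟨⟨2, by omega⟩, rfl, Or.inl rfl⟩⟩
      have hxw : (Sum.inl i : Fin 3 ⊕ Fin (3 * r)) ≠ w := by
        rw [grh_adj_inl] at hadj
        obtain ⟨j, rfl, -⟩ := hadj
        simp
      exact two_le_ncard_of_pair hxw
        ⟨mem_closedNbhd.2 (Or.inl rfl), hall i⟩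
        ⟨mem_closedNbhd.2 (Or.inr hadj), hwD⟩
    · have hne : (Sum.inl (A3 j.val) : Fin 3 ⊕ Fin (3 * r)) ≠ Sum.inl (A3 (j.val + 1)) := by
        simp only [ne_eq, Sum.inl.injEq, A3, Fin.mk.injEq]; omega
      exact two_le_ncard_of_pair hne
        ⟨mem_closedNbhd.2 (Or.inr ((grh_adj_inr _ _).2 (Or.inl rfl))), hall _⟩
        ⟨mem_closedNbhd.2 (Or.inr ((grh_adj_inr _ _).2 (Or.inr rfl))), hall _⟩
  have hcard : D0.ncard = 5 := by
    rw [hD0]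
    rw [Set.ncard_insert_of_notMem (by simp [A3, Fin.ext_iff]),
        Set.ncard_insert_of_notMem (by simp [A3, Fin.ext_iff]),
        Set.ncard_insert_of_notMem (by simp),
        Set.ncard_pair (by simp [Fin.ext_iff])]
  apply le_antisymm
  · exact Nat.sInf_le ⟨D0, hDD, hcard⟩
  · refine le_csInf ⟨5, D0, hDD, hcard⟩ ?_
    rintro k ⟨D, hD, rfl⟩
    by_cases h0 : Sum.inl (A3 0) ∈ D
    · by_cases h1 : Sum.inl (A3 1) ∈ D
      · by_cases h2 : Sum.inl (A3 2) ∈ D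
        · exact caseA hr hD h0 h1 h2
        · exact caseB hr hD 2 (by omega) h2
      · exact caseB hr hD 1 (by omega) h1
    · exact caseB hr hD 0 (by omega) h0
end

section
/- For every integer r ≥ 2, the graph G_r of the family H′, which has order n = 3(r+1), satisfies n − α(G_r) + γ(G_r) = 6, where α is the independence number and γ is the domination number. -/
/-! Basic domination-type definitions for finite simple graphs. -/

variable {V : Type*}

section Aux

open Sum

variable {r : ℕ}

lemma grh_adj_inl_inr (i : Fin 3) (j : Fin (3*r)) :
    (GrH r).Adj (inl i) (inr j) ↔ (i.val = j.val % 3 ∨ i.val = (j.val + 1) % 3) := by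
  simp [GrH, SimpleGraph.fromRel_adj]

lemma grh_not_adj_inl_inl (i i' : Fin 3) : ¬ (GrH r).Adj (inl i) (inl i') := by
  simp [GrH, SimpleGraph.fromRel_adj]

lemma grh_not_adj_inr_inr (j j' : Fin (3*r)) : ¬ (GrH r).Adj (inr j) (inr j') := by
  simp [GrH, SimpleGraph.fromRel_adj]

lemma grh_adj_inr_inl (i : Fin 3) (j : Fin (3*r)) :
    (GrH r).Adj (inr j) (inl i) ↔ (i.val = j.val % 3 ∨ i.val = (j.val + 1) % 3) := by
  rw [SimpleGraph.adj_comm]; exact grh_adj_inl_inr i j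

lemma class_ncard_le (c : ℕ) : ({j : Fin (3*r) | j.val % 3 = c}).ncard ≤ r := by
  apply le_trans (Set.ncard_le_ncard_of_injOn (fun j => (⟨j.val / 3, by omega⟩ : Fin r))
    (fun a _ => Set.mem_univ _) ?_ (Set.toFinite _))
  · simp [Set.ncard_univ]
  · rintro j1 h1 j2 h2 hj
    simp only [Set.mem_setOf_eq] at h1 h2
    simp only [Fin.mk.injEq] at hj
    exact Fin.ext (by omega)

lemma range_inr_ncard : (Set.range (Sum.inr : Fin (3*r) → Fin 3 ⊕ Fin (3*r))).ncard = 3*r := by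
  rw [← Set.image_univ, Set.ncard_image_of_injective _ Sum.inr_injective, Set.ncard_univ]
  simp

lemma range_inl_ncard : (Set.range (Sum.inl : Fin 3 → Fin 3 ⊕ Fin (3*r))).ncard = 3 := by
  rw [← Set.image_univ, Set.ncard_image_of_injective _ Sum.inl_injective, Set.ncard_univ]
  simp

/-- Any independent set in `GrH r` has at most `3r` vertices (for `r ≥ 2`). -/
lemma indep_ub (hr : 2 ≤ r) (S : Set (Fin 3 ⊕ Fin (3*r))) (hS : IsIndepSet' (GrH r) S) :
    S.ncard ≤ 3 * r := by
  by_cases hA : ∃ i : Fin 3, inl i ∈ S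
  · obtain ⟨i, hi⟩ := hA
    have hsub : S ⊆ (Set.range (Sum.inl : Fin 3 → Fin 3 ⊕ Fin (3*r))) ∪
        (Sum.inr '' {j : Fin (3*r) | j.val % 3 = (i.val + 1) % 3}) := by
      intro x hx
      cases x with
      | inl i' => exact Or.inl ⟨i', rfl⟩
      | inr j =>
        refine Or.inr ⟨j, ?_, rfl⟩
        have hnadj := hS _ hi _ hx
        rw [grh_adj_inl_inr] at hnadj
        push_neg at hnadj
        obtain ⟨h1, h2⟩ := hnadj
        have hji : j.val % 3 < 3 := Nat.mod_lt _ (by omega)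
        have hii : i.val < 3 := i.isLt
        simp only [Set.mem_setOf_eq]
        omega
    calc S.ncard ≤ _ := Set.ncard_le_ncard hsub (Set.toFinite _)
      _ ≤ (Set.range (Sum.inl : Fin 3 → Fin 3 ⊕ Fin (3*r))).ncard +
          (Sum.inr '' {j : Fin (3*r) | j.val % 3 = (i.val + 1) % 3}).ncard :=
            Set.ncard_union_le _ _
      _ ≤ 3 + r := by
          rw [range_inl_ncard, Set.ncard_image_of_injective _ Sum.inr_injective]
          exact Nat.add_le_add_left (class_ncard_le _) 3
      _ ≤ 3 * r := by omega
  · push_neg at hA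
    have hsub : S ⊆ Set.range (Sum.inr : Fin (3*r) → Fin 3 ⊕ Fin (3*r)) := by
      intro x hx
      cases x with
      | inl i' => exact absurd hx (hA i')
      | inr j => exact ⟨j, rfl⟩
    calc S.ncard ≤ _ := Set.ncard_le_ncard hsub (Set.toFinite _)
      _ = 3 * r := range_inr_ncard

/-- Helper: a dominating set of size ≤ 2 cannot consist of two distinct `a` vertices. -/
lemma two_as_false (hr : 2 ≤ r) (D : Set (Fin 3 ⊕ Fin (3*r))) (hdom : IsDomSet (GrH r) D)
    (hcard : D.ncard ≤ 2) {m k : Fin 3} (hm : inl m ∈ D) (hk : inl k ∈ D) (hmk : m ≠ k) :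
    False := by
  have hpairsub : ({inl m, inl k} : Set (Fin 3 ⊕ Fin (3*r))) ⊆ D := by
    rintro x (rfl | rfl) <;> assumption
  have hpair : ({inl m, inl k} : Set (Fin 3 ⊕ Fin (3*r))).ncard = 2 :=
    Set.ncard_pair (by simpa using hmk)
  have hDeq : ({inl m, inl k} : Set (Fin 3 ⊕ Fin (3*r))) = D :=
    Set.eq_of_subset_of_ncard_le hpairsub (by omega) (Set.toFinite _)
  obtain ⟨p, hpm, hpk⟩ : ∃ p : Fin 3, p ≠ m ∧ p ≠ k := by
    fin_cases m <;> fin_cases k <;> first | exact absurd rfl hmk | decide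
  have hpD : (inl p : Fin 3 ⊕ Fin (3*r)) ∉ D := by
    rw [← hDeq]
    rintro (h | h) <;> simp_all
  obtain ⟨u, huD, hadj⟩ := hdom _ hpD
  rw [← hDeq] at huD
  rcases huD with rfl | rfl <;> exact grh_not_adj_inl_inl _ _ hadj

/-- Any dominating set of `GrH r` has at least 3 vertices (for `r ≥ 2`). -/
lemma dom_lb (hr : 2 ≤ r) (D : Set (Fin 3 ⊕ Fin (3*r))) (hdom : IsDomSet (GrH r) D) :
    3 ≤ D.ncard := by
  by_contra hlt
  push_neg at hlt
  have hcard : D.ncard ≤ 2 := by omega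
  by_cases hc : ∃ c : Fin 3, inl c ∉ D ∧ inl (c+1) ∉ D
  · obtain ⟨c, hc1, hc2⟩ := hc
    have hc3 : c.val < 3 := c.isLt
    set j1 : Fin (3*r) := ⟨c.val, by omega⟩ with hj1def
    set j2 : Fin (3*r) := ⟨c.val + 3, by omega⟩ with hj2def
    have key : ∀ j : Fin (3*r), j.val % 3 = c.val → inr j ∈ D := by
      intro j hj
      by_contra hjD
      obtain ⟨u, huD, hadj⟩ := hdom _ hjD
      cases u with
      | inl i =>
        rw [grh_adj_inl_inr] at hadj
        have hiv : i.val < 3 := i.isLt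
        have hcv : (c+1).val = (c.val + 1) % 3 := by
          simp [Fin.add_def]
        rcases hadj with h | h
        · exact hc1 (by rwa [show i = c from Fin.ext (by omega)] at huD)
        · have : (j.val + 1) % 3 = (c.val + 1) % 3 := by omega
          exact hc2 (by rwa [show i = c + 1 from Fin.ext (by omega)] at huD)
      | inr j' => exact grh_not_adj_inr_inr _ _ hadj
    have h1 : inr j1 ∈ D := key j1 (show c.val % 3 = c.val by omega)
    have h2 : inr j2 ∈ D := key j2 (show (c.val + 3) % 3 = c.val by omega)
    have hpairsub : ({inr j1, inr j2} : Set (Fin 3 ⊕ Fin (3*r))) ⊆ D := by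
      rintro x (rfl | rfl) <;> assumption
    have hpair : ({inr j1, inr j2} : Set (Fin 3 ⊕ Fin (3*r))).ncard = 2 :=
      Set.ncard_pair (by simp [hj1def, hj2def, Fin.ext_iff])
    have hDeq : ({inr j1, inr j2} : Set (Fin 3 ⊕ Fin (3*r))) = D :=
      Set.eq_of_subset_of_ncard_le hpairsub (by omega) (Set.toFinite _)
    have hpD : (inl (c+2) : Fin 3 ⊕ Fin (3*r)) ∉ D := by
      rw [← hDeq]; rintro (h | h) <;> simp_all
    obtain ⟨u, huD, hadj⟩ := hdom _ hpD
    rw [← hDeq] at huD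
    have hcv : (c+2).val = (c.val + 2) % 3 := by simp [Fin.add_def]
    rcases huD with rfl | rfl <;>
      · rw [grh_adj_inr_inl] at hadj
        simp only [hj1def, hj2def] at hadj
        omega
  · push_neg at hc
    have h0 : inl (0 : Fin 3) ∈ D ∨ inl (0 + 1 : Fin 3) ∈ D := or_iff_not_imp_left.mpr (hc 0)
    have h1 : inl (1 : Fin 3) ∈ D ∨ inl (1 + 1 : Fin 3) ∈ D := or_iff_not_imp_left.mpr (hc 1)
    have h2 : inl (2 : Fin 3) ∈ D ∨ inl (2 + 1 : Fin 3) ∈ D := or_iff_not_imp_left.mpr (hc 2)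
    rcases h0 with h0 | h0 <;> rcases h1 with h1 | h1 <;> rcases h2 with h2 | h2 <;>
      first
        | exact two_as_false hr D hdom hcard h0 h1 (by decide)
        | exact two_as_false hr D hdom hcard h0 h2 (by decide)
        | exact two_as_false hr D hdom hcard h1 h2 (by decide)

lemma grh_indepNum (hr : 2 ≤ r) : indepNum (GrH r) = 3 * r := by
  have hmem : 3 * r ∈ {k | ∃ S : Set (Fin 3 ⊕ Fin (3*r)), IsIndepSet' (GrH r) S ∧ S.ncard = k} := by
    refine ⟨Set.range Sum.inr, ?_, range_inr_ncard⟩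
    rintro u ⟨j, rfl⟩ v ⟨j', rfl⟩
    exact grh_not_adj_inr_inr _ _
  have hbdd : ∀ k ∈ {k | ∃ S : Set (Fin 3 ⊕ Fin (3*r)), IsIndepSet' (GrH r) S ∧ S.ncard = k},
      k ≤ 3 * r := by
    rintro k ⟨S, hS, rfl⟩
    exact indep_ub hr S hS
  apply le_antisymm
  · exact csSup_le ⟨3 * r, hmem⟩ hbdd
  · exact le_csSup ⟨3 * r, hbdd⟩ hmem

lemma grh_domNum (hr : 2 ≤ r) : domNum (GrH r) = 3 := by
  have hdom0 : IsDomSet (GrH r) (Set.range Sum.inl) := by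
    intro v hv
    cases v with
    | inl i => exact absurd ⟨i, rfl⟩ hv
    | inr j =>
      refine ⟨inl ⟨j.val % 3, Nat.mod_lt _ (by omega)⟩, ⟨_, rfl⟩, ?_⟩
      rw [grh_adj_inl_inr]
      exact Or.inl rfl
  have hmem : 3 ∈ {k | ∃ D : Set (Fin 3 ⊕ Fin (3*r)), IsDomSet (GrH r) D ∧ D.ncard = k} :=
    ⟨Set.range Sum.inl, hdom0, range_inl_ncard⟩
  apply le_antisymm
  · exact Nat.sInf_le hmem
  · apply le_csInf ⟨3, hmem⟩
    rintro k ⟨D, hD, rfl⟩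
    exact dom_lb hr D hD

end Aux

/-- The graph `G_r` of the family `H'` has order `n = 3(r+1)` and satisfies
`n − α(G_r) + γ(G_r) = 6`. -/
theorem stmt13 (r : ℕ) (hr : 2 ≤ r) :
    Fintype.card (Fin 3 ⊕ Fin (3 * r)) = 3 * (r + 1) ∧
    3 * (r + 1) - indepNum (GrH r) + domNum (GrH r) = 6 := by
  refine ⟨by simp; ring, ?_⟩
  rw [grh_indepNum hr, grh_domNum hr]
  omega
end
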